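/- arXiv:1109.6075 — 10 statements merged into one kernel-verified Lean document; each statement's English description precedes it below -/
import Mathlib

section
/- Let A and B be n×n real matrices that are self-adjoint with respect to the L²(π) inner product, both leaving a set W ⊆ ℝⁿ invariant, and satisfying A ⪯ B (i.e. ⟨Ax,y⟩ ≤ ⟨Bx,y⟩ for all x,y ∈ W). Then for every t ≥ 0, Aᵗ and Bᵗ leave W invariant and Aᵗ ⪯ Bᵗ. -/
open Finset

/-- L²(π) inner product on `Fin n → ℝ`. -/
def cip {n : ℕ} (π f g : Fin n → ℝ) : ℝ := ∑ i, π i * (f i * g i)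

theorem stmt_1 {n : ℕ} (π : Fin n → ℝ) (hπpos : ∀ i, 0 < π i) (hπ1 : ∑ i, π i = 1)
    (W : Set (Fin n → ℝ)) (A B : Matrix (Fin n) (Fin n) ℝ)
    (hAsa : ∀ f g : Fin n → ℝ, cip π (A.mulVec f) g = cip π f (A.mulVec g))
    (hBsa : ∀ f g : Fin n → ℝ, cip π (B.mulVec f) g = cip π f (B.mulVec g))
    (hAW : ∀ w ∈ W, A.mulVec w ∈ W)
    (hBW : ∀ w ∈ W, B.mulVec w ∈ W)
    (hAB : ∀ x ∈ W, ∀ y ∈ W, cip π (A.mulVec x) y ≤ cip π (B.mulVec x) y) :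
    ∀ t : ℕ, (∀ w ∈ W, (A ^ t).mulVec w ∈ W) ∧ (∀ w ∈ W, (B ^ t).mulVec w ∈ W) ∧
      (∀ x ∈ W, ∀ y ∈ W, cip π ((A ^ t).mulVec x) y ≤ cip π ((B ^ t).mulVec x) y) := by
  intro t
  induction t with
  | zero =>
    refine ⟨?_, ?_, ?_⟩ <;> simp [Matrix.mulVec_one, Matrix.one_mulVec] <;> intros <;>
      simp_all [Matrix.one_mulVec, le_refl]
  | succ t ih =>
    obtain ⟨ihA, ihB, ihle⟩ := ih
    have hApow : ∀ x, (A ^ (t + 1)).mulVec x = A.mulVec ((A ^ t).mulVec x) := by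
      intro x
      rw [pow_succ', Matrix.mulVec_mulVec]
    have hBpow : ∀ x, (B ^ (t + 1)).mulVec x = B.mulVec ((B ^ t).mulVec x) := by
      intro x
      rw [pow_succ', Matrix.mulVec_mulVec]
    refine ⟨?_, ?_, ?_⟩
    · intro w hw; rw [hApow]; exact hAW _ (ihA w hw)
    · intro w hw; rw [hBpow]; exact hBW _ (ihB w hw)
    · intro x hx y hy
      calc cip π ((A ^ (t + 1)).mulVec x) y
          = cip π (A.mulVec ((A ^ t).mulVec x)) y := by rw [hApow]
        _ ≤ cip π (B.mulVec ((A ^ t).mulVec x)) y := hAB _ (ihA x hx) y hy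
        _ = cip π ((A ^ t).mulVec x) (B.mulVec y) := hBsa _ _
        _ ≤ cip π ((B ^ t).mulVec x) (B.mulVec y) := ihle x hx _ (hBW y hy)
        _ = cip π (B.mulVec ((B ^ t).mulVec x)) y := (hBsa _ _).symm
        _ = cip π ((B ^ (t + 1)).mulVec x) y := by rw [hBpow]
end

section
/- Let Y and Z be Markov chains on a finite poset X with common initial distribution π̂ and common stationary distribution π, such that π̂/π is non-increasing and the time-reversal of the kernel of Y is stochastically monotone. If Y dominates Z (i.e., P(Y_t ∈ D) ≤ P(Z_t ∈ D) for every down-set D and every time t), then for every t the total variation distance of the law of Y_t from π is at most that of the law of Z_t from π. -/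
open Finset

theorem stmt_4 {X : Type*} [Fintype X] [DecidableEq X] [PartialOrder X]
    (π πhat : X → ℝ) (hπpos : ∀ i, 0 < π i) (hπ1 : ∑ i, π i = 1)
    (hπhatnn : ∀ i, 0 ≤ πhat i) (hπhat1 : ∑ i, πhat i = 1)
    (K L : Matrix X X ℝ)
    (hKnn : ∀ i j, 0 ≤ K i j) (hKrow : ∀ i, ∑ j, K i j = 1)
    (hKstat : ∀ j, ∑ i, π i * K i j = π j)
    (hLnn : ∀ i j, 0 ≤ L i j) (hLrow : ∀ i, ∑ j, L i j = 1)
    (hLstat : ∀ j, ∑ i, π i * L i j = π j)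
    (hratio : Antitone (fun i => πhat i / π i))
    -- the time-reversal K* of the kernel of Y is stochastically monotone
    (hKstarMono : ∀ f : X → ℝ, (∀ i, 0 ≤ f i) → Antitone f →
      Antitone ((Matrix.of fun i j => π j * K j i / π i : Matrix X X ℝ).mulVec f))
    -- Y dominates Z
    (hdom : ∀ t : ℕ, ∀ D : Finset X, IsLowerSet (D : Set X) →
      ∑ j ∈ D, Matrix.vecMul πhat (K ^ t) j ≤ ∑ j ∈ D, Matrix.vecMul πhat (L ^ t) j) :
    ∀ t : ℕ,
      (1 / 2) * ∑ i, |Matrix.vecMul πhat (K ^ t) i - π i| ≤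
      (1 / 2) * ∑ i, |Matrix.vecMul πhat (L ^ t) i - π i| := by
  have step : ∀ (M : Matrix X X ℝ) (s : ℕ),
      Matrix.vecMul πhat (M ^ (s + 1)) = Matrix.vecMul (Matrix.vecMul πhat (M ^ s)) M := by
    intro M s
    rw [pow_succ, ← Matrix.vecMul_vecMul]
  have key : ∀ (M : Matrix X X ℝ), (∀ i j, 0 ≤ M i j) → (∀ i, ∑ j, M i j = 1) →
      ∀ s, (∀ i, 0 ≤ Matrix.vecMul πhat (M ^ s) i) ∧
        (∑ i, Matrix.vecMul πhat (M ^ s) i = 1) := by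
    intro M hnn hrow s
    induction s with
    | zero =>
      simp only [pow_zero, Matrix.vecMul_one]
      exact ⟨hπhatnn, hπhat1⟩
    | succ s ih =>
      rw [step M s]
      constructor
      · intro i
        simp only [Matrix.vecMul, dotProduct]
        exact Finset.sum_nonneg fun j _ => mul_nonneg (ih.1 j) (hnn j i)
      · simp only [Matrix.vecMul, dotProduct]
        rw [Finset.sum_comm]
        simp_rw [← Finset.mul_sum, hrow, mul_one]
        exact ih.2
  have habs : ∀ x : ℝ, |x| = 2 * max x 0 - x := by
    intro x
    rcases le_total x 0 with h | h
    · rw [abs_of_nonpos h, max_eq_right h]; ring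
    · rw [abs_of_nonneg h, max_eq_left h]; ring
  have tv : ∀ ρ : X → ℝ, (∑ i, ρ i = 1) →
      (1 / 2) * ∑ i, |ρ i - π i| = ∑ i, max (ρ i - π i) 0 := by
    intro ρ hρ1
    have h2 : ∑ i, |ρ i - π i|
        = 2 * (∑ i, max (ρ i - π i) 0) - ((∑ i, ρ i) - (∑ i, π i)) := by
      rw [Finset.mul_sum, ← Finset.sum_sub_distrib, ← Finset.sum_sub_distrib]
      exact Finset.sum_congr rfl fun i _ => habs _
    rw [h2, hρ1, hπ1]; ring
  have hf : ∀ s, Antitone (fun i => Matrix.vecMul πhat (K ^ s) i / π i) := by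
    intro s
    induction s with
    | zero => simpa [Matrix.vecMul_one] using hratio
    | succ s ih =>
      have hnn : ∀ i, 0 ≤ Matrix.vecMul πhat (K ^ s) i / π i :=
        fun i => div_nonneg ((key K hKnn hKrow s).1 i) (hπpos i).le
      have hm := hKstarMono _ hnn ih
      have heq : (fun i => Matrix.vecMul πhat (K ^ (s + 1)) i / π i)
          = (Matrix.of fun i j => π j * K j i / π i : Matrix X X ℝ).mulVec
              (fun i => Matrix.vecMul πhat (K ^ s) i / π i) := by
        funext j
        rw [step K s]
        simp only [Matrix.mulVec, dotProduct, Matrix.vecMul, Matrix.of_apply]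
        rw [Finset.sum_div]
        refine Finset.sum_congr rfl fun i _ => ?_
        have hi := (hπpos i).ne'
        have hj := (hπpos j).ne'
        field_simp
      rw [heq]
      exact hm
  intro t
  set D : Finset X := univ.filter (fun i => π i ≤ Matrix.vecMul πhat (K ^ t) i) with hD
  have hDlow : IsLowerSet (D : Set X) := by
    intro a b hba ha
    simp only [hD, coe_filter, Set.mem_setOf_eq, mem_univ, true_and] at ha ⊢
    have h1 : 1 ≤ Matrix.vecMul πhat (K ^ t) a / π a := (one_le_div (hπpos a)).mpr ha
    have h2 := hf t hba
    exact (one_le_div (hπpos b)).mp (le_trans h1 h2)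
  have hKeq : ∑ i, max (Matrix.vecMul πhat (K ^ t) i - π i) 0
      = ∑ i ∈ D, (Matrix.vecMul πhat (K ^ t) i - π i) := by
    rw [hD, Finset.sum_filter]
    refine Finset.sum_congr rfl fun i _ => ?_
    by_cases h : π i ≤ Matrix.vecMul πhat (K ^ t) i
    · simp [h, max_eq_left (sub_nonneg.mpr h)]
    · simp [h, max_eq_right (le_of_lt (sub_neg.mpr (lt_of_not_ge h)))]
  have hmid : ∑ i ∈ D, (Matrix.vecMul πhat (K ^ t) i - π i)
      ≤ ∑ i ∈ D, (Matrix.vecMul πhat (L ^ t) i - π i) := by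
    rw [Finset.sum_sub_distrib, Finset.sum_sub_distrib]
    exact sub_le_sub_right (hdom t D hDlow) _
  have hLle : ∑ i ∈ D, (Matrix.vecMul πhat (L ^ t) i - π i)
      ≤ ∑ i, max (Matrix.vecMul πhat (L ^ t) i - π i) 0 := by
    calc ∑ i ∈ D, (Matrix.vecMul πhat (L ^ t) i - π i)
        ≤ ∑ i ∈ D, max (Matrix.vecMul πhat (L ^ t) i - π i) 0 :=
          Finset.sum_le_sum fun i _ => le_max_left _ _
      _ ≤ ∑ i, max (Matrix.vecMul πhat (L ^ t) i - π i) 0 :=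
          Finset.sum_le_sum_of_subset_of_nonneg (Finset.subset_univ D)
            (fun i _ _ => le_max_right _ _)
  rw [tv _ (key K hKnn hKrow t).2, tv _ (key L hLnn hLrow t).2, hKeq]
  exact le_trans hmid hLle
end

section
/- Let Y and Z be Markov chains on a finite poset X with common initial distribution π̂ and common stationary distribution π, such that π̂/π is non-increasing and the time-reversal of the kernel of Y is stochastically monotone. If Y dominates Z, then for every t the separation distance max_i [1 − P(Y_t = i)/π(i)] is at most max_i [1 − P(Z_t = i)/π(i)]. -/
open Finset

theorem stmt_5 {X : Type*} [Fintype X] [DecidableEq X] [PartialOrder X] [Nonempty X]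
    (π πhat : X → ℝ) (hπpos : ∀ i, 0 < π i) (hπ1 : ∑ i, π i = 1)
    (hπhatnn : ∀ i, 0 ≤ πhat i) (hπhat1 : ∑ i, πhat i = 1)
    (K L : Matrix X X ℝ)
    (hKnn : ∀ i j, 0 ≤ K i j) (hKrow : ∀ i, ∑ j, K i j = 1)
    (hKstat : ∀ j, ∑ i, π i * K i j = π j)
    (hLnn : ∀ i j, 0 ≤ L i j) (hLrow : ∀ i, ∑ j, L i j = 1)
    (hLstat : ∀ j, ∑ i, π i * L i j = π j)
    (hratio : Antitone (fun i => πhat i / π i))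
    -- the time-reversal K* of the kernel of Y is stochastically monotone
    (hKstarMono : ∀ f : X → ℝ, (∀ i, 0 ≤ f i) → Antitone f →
      Antitone ((Matrix.of fun i j => π j * K j i / π i : Matrix X X ℝ).mulVec f))
    -- Y dominates Z
    (hdom : ∀ t : ℕ, ∀ D : Finset X, IsLowerSet (D : Set X) →
      ∑ j ∈ D, Matrix.vecMul πhat (K ^ t) j ≤ ∑ j ∈ D, Matrix.vecMul πhat (L ^ t) j) :
    ∀ t : ℕ,
      Finset.univ.sup' Finset.univ_nonempty
          (fun i => 1 - Matrix.vecMul πhat (K ^ t) i / π i) ≤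
      Finset.univ.sup' Finset.univ_nonempty
          (fun i => 1 - Matrix.vecMul πhat (L ^ t) i / π i) := by
  classical
  have hπne : ∀ i, π i ≠ 0 := fun i => (hπpos i).ne'
  -- nonnegativity of matrix powers
  have powKnn : ∀ t : ℕ, ∀ i j, 0 ≤ (K ^ t) i j := by
    intro t
    induction t with
    | zero =>
      intro i j; rw [pow_zero, Matrix.one_apply]; split_ifs <;> norm_num
    | succ t ih =>
      intro i j
      rw [pow_succ, Matrix.mul_apply]
      exact Finset.sum_nonneg fun k _ => mul_nonneg (ih i k) (hKnn k j)
  have powLnn : ∀ t : ℕ, ∀ i j, 0 ≤ (L ^ t) i j := by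
    intro t
    induction t with
    | zero =>
      intro i j; rw [pow_zero, Matrix.one_apply]; split_ifs <;> norm_num
    | succ t ih =>
      intro i j
      rw [pow_succ, Matrix.mul_apply]
      exact Finset.sum_nonneg fun k _ => mul_nonneg (ih i k) (hLnn k j)
  have powKrow : ∀ t : ℕ, ∀ i, ∑ j, (K ^ t) i j = 1 := by
    intro t
    induction t with
    | zero => intro i; simp [Matrix.one_apply]
    | succ t ih =>
      intro i
      rw [pow_succ]
      simp only [Matrix.mul_apply]
      rw [Finset.sum_comm]
      simp_rw [← Finset.mul_sum, hKrow, mul_one]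
      exact ih i
  have powLrow : ∀ t : ℕ, ∀ i, ∑ j, (L ^ t) i j = 1 := by
    intro t
    induction t with
    | zero => intro i; simp [Matrix.one_apply]
    | succ t ih =>
      intro i
      rw [pow_succ]
      simp only [Matrix.mul_apply]
      rw [Finset.sum_comm]
      simp_rw [← Finset.mul_sum, hLrow, mul_one]
      exact ih i
  set μ : ℕ → X → ℝ := fun t => Matrix.vecMul πhat (K ^ t) with hμ
  set ν : ℕ → X → ℝ := fun t => Matrix.vecMul πhat (L ^ t) with hν
  have hμapp : ∀ t j, μ t j = ∑ i, πhat i * (K ^ t) i j := by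
    intro t j; simp [hμ, Matrix.vecMul, dotProduct]
  have hνapp : ∀ t j, ν t j = ∑ i, πhat i * (L ^ t) i j := by
    intro t j; simp [hν, Matrix.vecMul, dotProduct]
  have μnn : ∀ t j, 0 ≤ μ t j := by
    intro t j; rw [hμapp]
    exact Finset.sum_nonneg fun i _ => mul_nonneg (hπhatnn i) (powKnn t i j)
  have νnn : ∀ t j, 0 ≤ ν t j := by
    intro t j; rw [hνapp]
    exact Finset.sum_nonneg fun i _ => mul_nonneg (hπhatnn i) (powLnn t i j)
  have μsum : ∀ t, ∑ j, μ t j = 1 := by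
    intro t
    simp_rw [hμapp]
    rw [Finset.sum_comm]
    simp_rw [← Finset.mul_sum, powKrow, mul_one]
    exact hπhat1
  have νsum : ∀ t, ∑ j, ν t j = 1 := by
    intro t
    simp_rw [hνapp]
    rw [Finset.sum_comm]
    simp_rw [← Finset.mul_sum, powLrow, mul_one]
    exact hπhat1
  -- f t = μ t / π is antitone for all t
  have fanti : ∀ t : ℕ, Antitone (fun i => μ t i / π i) := by
    intro t
    induction t with
    | zero =>
      have : (fun i => μ 0 i / π i) = fun i => πhat i / π i := by
        funext i; simp [hμ, Matrix.vecMul_one]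
      rw [this]; exact hratio
    | succ t ih =>
      have key : (fun i => μ (t + 1) i / π i) =
          (Matrix.of fun i j => π j * K j i / π i : Matrix X X ℝ).mulVec
            (fun j => μ t j / π j) := by
        funext i
        simp only [Matrix.mulVec, dotProduct, Matrix.of_apply]
        have h1 : μ (t + 1) i = ∑ j, μ t j * K j i := by
          simp only [hμapp, pow_succ, Matrix.mul_apply, Finset.mul_sum]
          rw [Finset.sum_comm]
          refine Finset.sum_congr rfl fun k _ => ?_
          rw [Finset.sum_mul]
          exact Finset.sum_congr rfl fun x _ => (mul_assoc _ _ _).symm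
        rw [h1, Finset.sum_div]
        refine Finset.sum_congr rfl fun j _ => ?_
        rw [div_mul_div_comm, div_eq_div_iff (hπne i) (mul_ne_zero (hπne i) (hπne j))]
        ring
      rw [key]
      exact hKstarMono _ (fun j => div_nonneg (μnn t j) (hπpos j).le) ih
  intro t
  -- minimizer of f t
  obtain ⟨i₀, -, hi₀⟩ := Finset.exists_min_image Finset.univ (fun i => μ t i / π i)
    ⟨Classical.arbitrary X, Finset.mem_univ _⟩
  obtain ⟨j₀, -, hj₀⟩ := Finset.exists_min_image Finset.univ (fun i => ν t i / π i)
    ⟨Classical.arbitrary X, Finset.mem_univ _⟩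
  -- the up-set of i₀ and its complement
  set U : Finset X := Finset.univ.filter (fun j => i₀ ≤ j) with hU
  set D : Finset X := Finset.univ.filter (fun j => ¬ i₀ ≤ j) with hD
  have hDlow : IsLowerSet (D : Set X) := by
    intro a b hba ha
    simp only [hD, Finset.coe_filter, Set.mem_setOf_eq, Finset.mem_univ, true_and] at ha ⊢
    exact fun h => ha (h.trans hba)
  have hsplit : ∀ w : X → ℝ, ∑ j ∈ D, w j + ∑ j ∈ U, w j = ∑ j, w j := by
    intro w
    rw [hD, hU]
    rw [← Finset.sum_filter_add_sum_filter_not Finset.univ (fun j => ¬ i₀ ≤ j) w]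
    simp
  have hdomU : ∑ j ∈ U, ν t j ≤ ∑ j ∈ U, μ t j := by
    have h := hdom t D hDlow
    have h1 := hsplit (μ t)
    have h2 := hsplit (ν t)
    rw [μsum t] at h1
    rw [νsum t] at h2
    linarith
  have hi₀U : i₀ ∈ U := by simp [hU]
  have hπUpos : 0 < ∑ j ∈ U, π j :=
    Finset.sum_pos' (fun j _ => (hπpos j).le) ⟨i₀, hi₀U, hπpos i₀⟩
  -- on U, μ t j / π j = min, hence ≤ min value times π
  have hupper : ∑ j ∈ U, μ t j ≤ (μ t i₀ / π i₀) * ∑ j ∈ U, π j := by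
    rw [Finset.mul_sum]
    refine Finset.sum_le_sum fun j hj => ?_
    have hji : i₀ ≤ j := (Finset.mem_filter.mp hj).2
    have := fanti t hji
    calc μ t j = (μ t j / π j) * π j := (div_mul_cancel₀ _ (hπne j)).symm
    _ ≤ (μ t i₀ / π i₀) * π j := by
        exact mul_le_mul_of_nonneg_right this (hπpos j).le
  have hlower : (ν t j₀ / π j₀) * ∑ j ∈ U, π j ≤ ∑ j ∈ U, ν t j := by
    rw [Finset.mul_sum]
    refine Finset.sum_le_sum fun j hj => ?_
    calc (ν t j₀ / π j₀) * π j ≤ (ν t j / π j) * π j :=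
          mul_le_mul_of_nonneg_right (hj₀ j (Finset.mem_univ j)) (hπpos j).le
    _ = ν t j := div_mul_cancel₀ _ (hπne j)
  have hmin : ν t j₀ / π j₀ ≤ μ t i₀ / π i₀ := by
    have := hlower.trans (hdomU.trans hupper)
    exact le_of_mul_le_mul_right this hπUpos
  -- conclude
  apply Finset.sup'_le
  intro i _
  have h1 : 1 - μ t i / π i ≤ 1 - μ t i₀ / π i₀ := by
    have := hi₀ i (Finset.mem_univ i); linarith
  have h2 : 1 - ν t j₀ / π j₀ ≤ Finset.univ.sup' Finset.univ_nonempty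
      (fun i => 1 - ν t i / π i) := Finset.le_sup' (fun i => 1 - ν t i / π i) (Finset.mem_univ j₀)
  have : 1 - μ t i₀ / π i₀ ≤ 1 - ν t j₀ / π j₀ := by linarith
  calc 1 - μ t i / π i ≤ 1 - μ t i₀ / π i₀ := h1
  _ ≤ 1 - ν t j₀ / π j₀ := this
  _ ≤ _ := h2
end

section
/- Let Y and Z be Markov chains on a finite set X with reversible kernels K and L having common stationary distribution π > 0 and common initial distribution π̂. If the two-step chain (Y_{2t}) stochastically dominates (Z_{2t}) at every time (with respect to a partial order on X), π̂/π is non-increasing, and K² is stochastically monotone, then for every t, Σ_i π(i)[P(Y_t=i)/π(i) − 1]² ≤ Σ_i π(i)[P(Z_t=i)/π(i) − 1]². -/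
/-!
For a reversible kernel, `P(Y_t = i) / π(i)` is the kernel applied to the density `π̂ / π`,
so the chi-square distance to stationarity equals `∑ⱼ P(Y_{2t} = j) π̂(j) / π(j) - 1`: the
expectation of the non-negative non-increasing function `π̂ / π` under the law of `Y_{2t}`,
minus one.
Expectations of such functions are monotone under stochastic domination (peel off the indicator of
the lower set where the function is positive, times its least positive value, and induct on the
size of that set), so the domination `Y_{2t} ≼ Z_{2t}` gives the comparison.
-/

open Finset Matrix

section Domination

variable {X : Type*} [Fintype X] [PartialOrder X]

theorem dotProduct_le_dotProduct_of_forall_isLowerSet {p q : X → ℝ}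
    (hpq : ∀ D : Finset X, IsLowerSet (D : Set X) → ∑ j ∈ D, p j ≤ ∑ j ∈ D, q j)
    {f : X → ℝ} (hf₀ : 0 ≤ f) (hf : Antitone f) : f ⬝ᵥ p ≤ f ⬝ᵥ q := by
  classical
  induction h : #{i | 0 < f i} using Nat.strong_induction_on generalizing f with
  | _ n ih =>
  set D : Finset X := {i | 0 < f i} with hD
  have hmem {i} : i ∈ D ↔ 0 < f i := by simp [hD]
  have hzero {i} (hi : i ∉ D) : f i = 0 := (hf₀ i).antisymm' (not_lt.1 (hmem.not.1 hi))
  rcases D.eq_empty_or_nonempty with hempty | hne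
  · have hf_zero : f = 0 := funext fun i => hzero (hempty ▸ notMem_empty i)
    simp [hf_zero]
  obtain ⟨i₀, hi₀, hmin⟩ := D.exists_min_image f hne
  set m := f i₀
  have hD_lower : IsLowerSet (D : Set X) := fun a b hba ha =>
    hmem.2 ((hmem.1 ha).trans_le (hf hba))
  set χ : X → ℝ := fun i => if i ∈ D then 1 else 0
  set g := f - m • χ
  have hg {i} : g i = if i ∈ D then f i - m else f i := by
    by_cases hi : i ∈ D <;> simp [g, χ, hi]
  have hg_nonneg : 0 ≤ g := fun i => by
    by_cases hi : i ∈ D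
    · simp [hg, hi, hmin i hi]
    · rw [hg, if_neg hi]; exact hf₀ i
  have hg_anti : Antitone g := fun a b hab => by
    by_cases ha : a ∈ D <;> by_cases hb : b ∈ D <;> simp only [hg, ha, hb, if_true, if_false]
    · linarith [hf hab]
    · linarith [hmin a ha, hzero hb]
    · exact absurd (hmem.2 ((hmem.1 hb).trans_le (hf hab))) ha
    · exact hf hab
  have hg_card : #{i | 0 < g i} < n := by
    refine h ▸ (card_le_card fun i hi => ?_).trans_lt (card_erase_lt_of_mem hi₀)
    have hgi : 0 < g i := by simpa using hi
    have hiD : i ∈ D := by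
      by_contra hiD
      simp [hg, hiD, hzero hiD] at hgi
    refine mem_erase.2 ⟨fun hii => ?_, hiD⟩
    simp [hg, hii, hi₀, m] at hgi
  have hsplit (r : X → ℝ) : f ⬝ᵥ r = m * ∑ j ∈ D, r j + g ⬝ᵥ r := by
    have hχ : χ ⬝ᵥ r = ∑ j ∈ D, r j := by simp [χ, dotProduct, ite_mul, sum_ite_mem]
    rw [← hχ, ← smul_eq_mul, ← smul_dotProduct, ← add_dotProduct]
    simp [g]
  rw [hsplit, hsplit]
  exact add_le_add (mul_le_mul_of_nonneg_left (hpq D hD_lower) (hf₀ i₀))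
    (ih _ hg_card hg_nonneg hg_anti rfl)

end Domination

section Reversible

variable {X : Type*} [Fintype X]

theorem pow_mulVec_one_of_mulVec_one [DecidableEq X] {P : Matrix X X ℝ} (hP : P *ᵥ 1 = 1)
    (t : ℕ) : P ^ t *ᵥ 1 = 1 := by
  induction t with
  | zero => simp
  | succ t ih => rw [pow_succ, ← mulVec_mulVec, hP, ih]

theorem sum_vecMul_of_mulVec_one {P : Matrix X X ℝ} (hP : P *ᵥ 1 = 1) (v : X → ℝ) :
    ∑ j, (v ᵥ* P) j = ∑ j, v j := by
  rw [← dotProduct_one, ← dotProduct_one, ← dotProduct_mulVec, hP]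

theorem semiconjBy_diagonal_transpose [DecidableEq X] {π : X → ℝ} {P : Matrix X X ℝ}
    (hP : ∀ i j, π i * P i j = π j * P j i) : SemiconjBy (diagonal π) P Pᵀ := by
  ext i j
  simp [diagonal_mul, mul_diagonal, hP i j, mul_comm]

theorem vecMul_eq_mul_mulVec_div [DecidableEq X] {π : X → ℝ} (hπ : ∀ i, π i ≠ 0)
    {P : Matrix X X ℝ} (hP : SemiconjBy (diagonal π) P Pᵀ) (v : X → ℝ) :
    v ᵥ* P = π * (P *ᵥ (v / π)) := by
  have hv : v = diagonal π *ᵥ (v / π) := funext fun i => by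
    simp [mulVec_diagonal, mul_div_cancel₀ _ (hπ i)]
  conv_lhs => rw [← mulVec_transpose, hv, mulVec_mulVec, ← hP.eq, ← mulVec_mulVec]
  ext i
  simp [mulVec_diagonal]

theorem sum_mul_div_sub_one_sq {π a : X → ℝ} (hπ : ∀ i, π i ≠ 0) (hπ1 : ∑ i, π i = 1)
    (ha1 : ∑ i, a i = 1) : ∑ i, π i * (a i / π i - 1) ^ 2 = a ⬝ᵥ (a / π) - 1 := by
  have hterm (i : X) : π i * (a i / π i - 1) ^ 2 = a i * (a i / π i) - 2 * a i + π i := by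
    field_simp [hπ i]
    ring
  simp only [hterm, sum_add_distrib, sum_sub_distrib, ← mul_sum, ha1, hπ1, dotProduct,
    Pi.div_apply]
  ring

theorem chiSq_vecMul_pow_eq [DecidableEq X] {π v : X → ℝ} (hπ : ∀ i, π i ≠ 0)
    (hπ1 : ∑ i, π i = 1) (hv1 : ∑ i, v i = 1) {P : Matrix X X ℝ} (hProw : P *ᵥ 1 = 1)
    (hP : SemiconjBy (diagonal π) P Pᵀ) (t : ℕ) :
    ∑ i, π i * ((v ᵥ* P ^ t) i / π i - 1) ^ 2 = (v / π) ⬝ᵥ (v ᵥ* P ^ (2 * t)) - 1 := by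
  have hPt : SemiconjBy (diagonal π) (P ^ t) (P ^ t)ᵀ := transpose_pow P t ▸ hP.pow_right t
  have hdensity : (v ᵥ* P ^ t) / π = P ^ t *ᵥ (v / π) := by
    ext i
    simp [vecMul_eq_mul_mulVec_div hπ hPt, mul_div_cancel_left₀ _ (hπ i)]
  rw [sum_mul_div_sub_one_sq hπ hπ1 (by rw [sum_vecMul_of_mulVec_one
    (pow_mulVec_one_of_mulVec_one hProw t), hv1]), hdensity, dotProduct_mulVec, vecMul_vecMul,
    ← pow_add, ← two_mul, dotProduct_comm]

end Reversible

theorem stmt_6_general {X : Type*} [Fintype X] [DecidableEq X] [PartialOrder X]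
    (π πhat : X → ℝ) (hπpos : ∀ i, 0 < π i) (hπ1 : ∑ i, π i = 1)
    (hπhatnn : ∀ i, 0 ≤ πhat i) (hπhat1 : ∑ i, πhat i = 1)
    (K L : Matrix X X ℝ)
    (hKrow : ∀ i, ∑ j, K i j = 1)
    (hKrev : ∀ i j, π i * K i j = π j * K j i)
    (hLrow : ∀ i, ∑ j, L i j = 1)
    (hLrev : ∀ i j, π i * L i j = π j * L j i)
    (hratio : Antitone (fun i => πhat i / π i))
    -- the two-step chain (Y_{2t}) stochastically dominates (Z_{2t})
    (hdom : ∀ t : ℕ, ∀ D : Finset X, IsLowerSet (D : Set X) →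
      ∑ j ∈ D, Matrix.vecMul πhat (K ^ (2 * t)) j ≤
        ∑ j ∈ D, Matrix.vecMul πhat (L ^ (2 * t)) j) :
    ∀ t : ℕ,
      ∑ i, π i * (Matrix.vecMul πhat (K ^ t) i / π i - 1) ^ 2 ≤
      ∑ i, π i * (Matrix.vecMul πhat (L ^ t) i / π i - 1) ^ 2 := by
  intro t
  have hπ (i : X) : π i ≠ 0 := (hπpos i).ne'
  have hrow {P : Matrix X X ℝ} (h : ∀ i, ∑ j, P i j = 1) : P *ᵥ 1 = 1 :=
    funext fun i => by simp [mulVec, dotProduct, h]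
  rw [chiSq_vecMul_pow_eq hπ hπ1 hπhat1 (hrow hKrow) (semiconjBy_diagonal_transpose hKrev),
    chiSq_vecMul_pow_eq hπ hπ1 hπhat1 (hrow hLrow) (semiconjBy_diagonal_transpose hLrev)]
  exact sub_le_sub_right (dotProduct_le_dotProduct_of_forall_isLowerSet (hdom t)
    (fun i => div_nonneg (hπhatnn i) (hπpos i).le) hratio) 1

theorem stmt_6 {X : Type*} [Fintype X] [DecidableEq X] [PartialOrder X]
    (π πhat : X → ℝ) (hπpos : ∀ i, 0 < π i) (hπ1 : ∑ i, π i = 1)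
    (hπhatnn : ∀ i, 0 ≤ πhat i) (hπhat1 : ∑ i, πhat i = 1)
    (K L : Matrix X X ℝ)
    (hKnn : ∀ i j, 0 ≤ K i j) (hKrow : ∀ i, ∑ j, K i j = 1)
    (hKrev : ∀ i j, π i * K i j = π j * K j i)
    (hLnn : ∀ i j, 0 ≤ L i j) (hLrow : ∀ i, ∑ j, L i j = 1)
    (hLrev : ∀ i j, π i * L i j = π j * L j i)
    (hratio : Antitone (fun i => πhat i / π i))
    -- K² is stochastically monotone
    (hK2Mono : ∀ f : X → ℝ, (∀ i, 0 ≤ f i) → Antitone f →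
      Antitone ((K * K).mulVec f))
    -- the two-step chain (Y_{2t}) stochastically dominates (Z_{2t})
    (hdom : ∀ t : ℕ, ∀ D : Finset X, IsLowerSet (D : Set X) →
      ∑ j ∈ D, Matrix.vecMul πhat (K ^ (2 * t)) j ≤
        ∑ j ∈ D, Matrix.vecMul πhat (L ^ (2 * t)) j) :
    ∀ t : ℕ,
      ∑ i, π i * (Matrix.vecMul πhat (K ^ t) i / π i - 1) ^ 2 ≤
      ∑ i, π i * (Matrix.vecMul πhat (L ^ t) i / π i - 1) ^ 2 :=
  stmt_6_general π πhat hπpos hπ1 hπhatnn hπhat1 K L hKrow hKrev hLrow hLrev hratio hdom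
end

section
/- Let K be a symmetric birth-and-death kernel on {0,...,n} with K(i,i+1)=K(i+1,i)=p_i and p_i + p_{i+1} ≤ 1 for all i. Then K² is stochastically monotone: for the indicator f of any down-set {0,...,ℓ}, the function K²f is non-increasing. -/
open Finset

/-- Symmetric birth-and-death kernel on `{0,...,n}` with edge probabilities
`K(i,i+1) = K(i+1,i) = p i` and holding probabilities making rows sum to 1. -/
noncomputable def bdK (n : ℕ) (p : ℕ → ℝ) : Matrix (Fin (n + 1)) (Fin (n + 1)) ℝ :=
  Matrix.of fun i j =>
    if (j : ℕ) = (i : ℕ) + 1 then p i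
    else if (i : ℕ) = (j : ℕ) + 1 then p j
    else if i = j then
      1 - (if (i : ℕ) < n then p i else 0) - (if (i : ℕ) = 0 then 0 else p ((i : ℕ) - 1))
    else 0

noncomputable def bdP (n : ℕ) (p : ℕ → ℝ) : ℕ → ℝ := fun i => if i < n then p i else 0

noncomputable def bdF (n : ℕ) (p : ℕ → ℝ) (L : ℕ) : ℕ → ℝ := fun m =>
  if m < L then 1 else if m = L then 1 - bdP n p L else if m = L + 1 then bdP n p L else 0

noncomputable def bdG (n : ℕ) (p : ℕ → ℝ) (L : ℕ) : ℕ → ℝ := fun m =>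
  (if m = 0 then 0 else bdP n p (m-1) * bdF n p L (m-1))
  + (1 - bdP n p m - (if m = 0 then 0 else bdP n p (m-1))) * bdF n p L m
  + bdP n p m * bdF n p L (m+1)

lemma bdG_zero (n : ℕ) (p : ℕ → ℝ) (L : ℕ) :
    bdG n p L 0 = (1 - bdP n p 0) * bdF n p L 0 + bdP n p 0 * bdF n p L 1 := by
  simp [bdG]

lemma bdG_succ (n : ℕ) (p : ℕ → ℝ) (L : ℕ) (k : ℕ) :
    bdG n p L (k+1) = bdP n p k * bdF n p L k
      + (1 - bdP n p (k+1) - bdP n p k) * bdF n p L (k+1)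
      + bdP n p (k+1) * bdF n p L (k+2) := by
  simp [bdG]

lemma bdF_lt {n : ℕ} {p : ℕ → ℝ} {L m : ℕ} (h : m < L) : bdF n p L m = 1 := if_pos h

lemma bdF_self (n : ℕ) (p : ℕ → ℝ) (L : ℕ) : bdF n p L L = 1 - bdP n p L := by
  simp [bdF]

lemma bdF_succ_self (n : ℕ) (p : ℕ → ℝ) (L : ℕ) : bdF n p L (L+1) = bdP n p L := by
  simp [bdF]

lemma bdF_ge {n : ℕ} {p : ℕ → ℝ} {L m : ℕ} (h : L + 2 ≤ m) : bdF n p L m = 0 := by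
  unfold bdF
  rw [if_neg (by omega), if_neg (by omega), if_neg (by omega)]

lemma bdF_eq_of_eq {n : ℕ} {p : ℕ → ℝ} {L m : ℕ} (h : m = L) : bdF n p L m = 1 - bdP n p L := by
  rw [h, bdF_self]

lemma bdF_eq_of_succ {n : ℕ} {p : ℕ → ℝ} {L m : ℕ} (h : m = L + 1) :
    bdF n p L m = bdP n p L := by
  rw [h, bdF_succ_self]

lemma bdG_step (n : ℕ) (p : ℕ → ℝ)
    (hP0 : ∀ i, 0 ≤ bdP n p i) (hP1 : ∀ i, bdP n p i ≤ 1)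
    (hPs : ∀ i, bdP n p i + bdP n p (i+1) ≤ 1) (L : ℕ) :
    ∀ m, bdG n p L (m+1) ≤ bdG n p L m := by
  intro m
  rcases m with _ | k
  · rw [bdG_succ n p L 0, bdG_zero]
    simp only [show 0+1 = 1 from rfl, show 0+2 = 2 from rfl]
    rcases (by omega : L = 0 ∨ L = 1 ∨ L = 2 ∨ 3 ≤ L) with h | h | h | h
    · subst h
      rw [bdF_eq_of_eq (rfl : (0:ℕ) = 0), bdF_eq_of_succ (show (1:ℕ) = 0 + 1 by norm_num),
        bdF_ge (show 0 + 2 ≤ 2 by norm_num)]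
      nlinarith [sq_nonneg (1 - 2 * bdP n p 0), mul_nonneg (hP0 0) (hP0 1), hP0 0, hP0 1]
    · subst h
      rw [bdF_lt (show 0 < 1 by norm_num), bdF_eq_of_eq (rfl : (1:ℕ) = 1),
        bdF_eq_of_succ (show (2:ℕ) = 1 + 1 by norm_num)]
      nlinarith [hP0 1, hPs 0, hP0 0]
    · subst h
      rw [bdF_lt (show 0 < 2 by norm_num), bdF_lt (show 1 < 2 by norm_num),
        bdF_eq_of_eq (rfl : (2:ℕ) = 2)]
      nlinarith [mul_nonneg (hP0 1) (hP0 2)]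
    · rw [bdF_lt (by omega : 0 < L), bdF_lt (by omega : 1 < L), bdF_lt (by omega : 2 < L)]
      linarith
  · rw [bdG_succ n p L (k+1), bdG_succ n p L k]
    simp only [show k+1+1 = k+2 from rfl, show k+1+2 = k+3 from rfl]
    rcases (by omega : k + 4 ≤ L ∨ L = k+3 ∨ L = k+2 ∨ L = k+1 ∨ L = k ∨ k = L + 1 ∨ L + 2 ≤ k)
      with h | h | h | h | h | h | h
    · rw [bdF_lt (by omega : k < L), bdF_lt (by omega : k+1 < L),
        bdF_lt (by omega : k+2 < L), bdF_lt (by omega : k+3 < L)]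
      linarith
    · rw [bdF_lt (by omega : k < L), bdF_lt (by omega : k+1 < L),
        bdF_lt (by omega : k+2 < L), bdF_eq_of_eq (by omega)]
      nlinarith [mul_nonneg (hP0 (k+2)) (hP0 L), hP0 (k+2), hP0 L]
    · rw [bdF_lt (by omega : k < L), bdF_lt (by omega : k+1 < L),
        bdF_eq_of_eq (by omega : k+2 = L), bdF_eq_of_succ (by omega : k+3 = L+1)]
      have hL : L = k + 2 := h
      subst hL
      nlinarith [hP0 (k+2), hPs (k+1), hP0 (k+1)]
    · rw [bdF_lt (by omega : k < L), bdF_eq_of_eq (by omega : k+1 = L),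
        bdF_eq_of_succ (by omega : k+2 = L+1), bdF_ge (by omega : L + 2 ≤ k+3)]
      have hL : L = k + 1 := h
      subst hL
      nlinarith [sq_nonneg (1 - 2 * bdP n p (k+1)), mul_nonneg (hP0 k) (hP0 (k+1)),
        mul_nonneg (hP0 (k+2)) (hP0 (k+1)), hP0 k, hP0 (k+1), hP0 (k+2)]
    · rw [bdF_eq_of_eq (by omega : k = L), bdF_eq_of_succ (by omega : k+1 = L+1),
        bdF_ge (by omega : L + 2 ≤ k+2), bdF_ge (by omega : L + 2 ≤ k+3)]
      have hL : L = k := h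
      subst hL
      nlinarith [hP0 L, hPs L, hP0 (L+1)]
    · rw [bdF_eq_of_succ (by omega : k = L+1), bdF_ge (by omega : L + 2 ≤ k+1),
        bdF_ge (by omega : L + 2 ≤ k+2), bdF_ge (by omega : L + 2 ≤ k+3)]
      nlinarith [mul_nonneg (hP0 k) (hP0 L)]
    · rw [bdF_ge (by omega : L + 2 ≤ k), bdF_ge (by omega : L + 2 ≤ k+1),
        bdF_ge (by omega : L + 2 ≤ k+2), bdF_ge (by omega : L + 2 ≤ k+3)]
      simp

lemma bdK_mulVec (n : ℕ) (p : ℕ → ℝ) (f : Fin (n+1) → ℝ) (i : Fin (n+1)) :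
    (bdK n p).mulVec f i =
      (if h : 0 < (i:ℕ) then p ((i:ℕ)-1) * f ⟨(i:ℕ)-1, by omega⟩ else 0)
      + (1 - (if (i:ℕ) < n then p (i:ℕ) else 0) - (if (i:ℕ) = 0 then 0 else p ((i:ℕ)-1))) * f i
      + (if h : (i:ℕ) < n then p (i:ℕ) * f ⟨(i:ℕ)+1, by omega⟩ else 0) := by
  classical
  have hrow : ∀ j : Fin (n+1), bdK n p i j * f j =
      (if (i:ℕ) = (j:ℕ) + 1 then p ((j:ℕ)) * f j else 0)
      + (if j = i then
          (1 - (if (i:ℕ) < n then p (i:ℕ) else 0) - (if (i:ℕ) = 0 then 0 else p ((i:ℕ)-1))) * f j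
         else 0)
      + (if (j:ℕ) = (i:ℕ) + 1 then p (i:ℕ) * f j else 0) := by
    intro j
    simp only [bdK, Matrix.of_apply]
    by_cases h1 : (j:ℕ) = (i:ℕ)+1
    · have h2 : ¬ (i:ℕ) = (j:ℕ)+1 := by omega
      have h3 : ¬ j = i := by simp [Fin.ext_iff]; omega
      rw [if_pos h1, if_neg h2, if_neg h3, if_pos h1]
      ring
    · by_cases h2 : (i:ℕ) = (j:ℕ)+1
      · have h3 : ¬ j = i := by simp [Fin.ext_iff]; omega
        rw [if_neg h1, if_pos h2, if_pos h2, if_neg h3, if_neg h1]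
        ring
      · by_cases h3 : j = i
        · rw [if_neg h1, if_neg h2, if_pos h3.symm, if_neg h2, if_pos h3, if_neg h1]
          ring
        · have h3' : ¬ i = j := fun h => h3 h.symm
          rw [if_neg h1, if_neg h2, if_neg h3', if_neg h2, if_neg h3, if_neg h1]
          ring
  have hmv : (bdK n p).mulVec f i = ∑ j : Fin (n+1), bdK n p i j * f j := rfl
  rw [hmv, Finset.sum_congr rfl (fun j _ => hrow j), Finset.sum_add_distrib,
    Finset.sum_add_distrib]
  congr 1
  · congr 1
    · by_cases hi : 0 < (i:ℕ)
      · rw [dif_pos hi]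
        have hc : ∀ j : Fin (n+1), ((i:ℕ) = (j:ℕ) + 1) ↔ (j = ⟨(i:ℕ)-1, by omega⟩) := by
          intro j; rw [Fin.ext_iff]; simp; omega
        rw [Finset.sum_congr rfl (fun j _ => if_congr (hc j) rfl rfl),
          Finset.sum_ite_eq' Finset.univ (⟨(i:ℕ)-1, by omega⟩ : Fin (n+1))
            (fun j : Fin (n+1) => p ((j:ℕ)) * f j)]
        simp
      · rw [dif_neg hi]
        exact Finset.sum_eq_zero (fun j _ => if_neg (by omega))
    · rw [Finset.sum_ite_eq' Finset.univ i (fun j : Fin (n+1) =>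
        (1 - (if (i:ℕ) < n then p (i:ℕ) else 0) - (if (i:ℕ) = 0 then 0 else p ((i:ℕ)-1))) * f j)]
      simp
  · by_cases hi : (i:ℕ) < n
    · rw [dif_pos hi]
      have hc : ∀ j : Fin (n+1), ((j:ℕ) = (i:ℕ) + 1) ↔ (j = ⟨(i:ℕ)+1, by omega⟩) := by
        intro j; rw [Fin.ext_iff]
      rw [Finset.sum_congr rfl (fun j _ => if_congr (hc j) rfl rfl),
        Finset.sum_ite_eq' Finset.univ (⟨(i:ℕ)+1, by omega⟩ : Fin (n+1))
          (fun j : Fin (n+1) => p ((i:ℕ)) * f j)]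
      simp
    · rw [dif_neg hi]
      refine Finset.sum_eq_zero (fun j _ => if_neg ?_)
      have := j.isLt; omega

set_option maxHeartbeats 2000000 in
lemma bdKf (n : ℕ) (p : ℕ → ℝ) (hle1 : ∀ i, i < n → p i ≤ 1) (ℓ : Fin (n+1)) :
    ∀ (k : ℕ) (hk : k < n+1),
      (bdK n p).mulVec (fun j => if j ≤ ℓ then (1:ℝ) else 0) ⟨k, hk⟩ = bdF n p (ℓ:ℕ) k := by
  intro k hk
  rw [bdK_mulVec]
  have hv : ∀ (t : ℕ) (ht : t < n+1),
      (if (⟨t, ht⟩ : Fin (n+1)) ≤ ℓ then (1:ℝ) else 0) = if t ≤ (ℓ:ℕ) then 1 else 0 := by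
    intro t ht
    simp [Fin.le_def]
  simp only [hv]
  rcases (by omega : k < (ℓ:ℕ) ∨ k = (ℓ:ℕ) ∨ k = (ℓ:ℕ)+1 ∨ (ℓ:ℕ)+2 ≤ k) with h | h | h | h
  · simp only [bdF, bdP]
    split_ifs <;> (first | ring1 | (exfalso; omega))
  · subst h
    simp only [bdF, bdP]
    split_ifs <;> (first | ring1 | (exfalso; omega))
  · subst h
    simp only [bdF, bdP, Nat.add_sub_cancel]
    split_ifs <;> (first | ring1 | (exfalso; omega))
  · simp only [bdF, bdP]
    split_ifs <;> (first | ring1 | (exfalso; omega))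

set_option maxHeartbeats 2000000 in
lemma bdKKf (n : ℕ) (p : ℕ → ℝ) (hle1 : ∀ i, i < n → p i ≤ 1) (ℓ : Fin (n+1)) :
    ∀ (k : ℕ) (hk : k < n+1),
      (bdK n p * bdK n p).mulVec (fun j => if j ≤ ℓ then (1:ℝ) else 0) ⟨k, hk⟩
        = bdG n p (ℓ:ℕ) k := by
  intro k hk
  rw [← Matrix.mulVec_mulVec, bdK_mulVec]
  simp only [bdKf n p hle1 ℓ]
  simp only [bdG, bdP]
  split_ifs <;> (first | ring1 | (exfalso; omega))

theorem stmt_10 {n : ℕ} (p : ℕ → ℝ)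
    (hnn : ∀ i, i < n → 0 ≤ p i) (hle1 : ∀ i, i < n → p i ≤ 1)
    (hsum : ∀ i, i + 1 < n → p i + p (i + 1) ≤ 1) :
    ∀ ℓ : Fin (n + 1),
      Antitone ((bdK n p * bdK n p).mulVec fun j => if j ≤ ℓ then (1 : ℝ) else 0) := by
  intro ℓ a b hab
  have hP0 : ∀ i, 0 ≤ bdP n p i := by
    intro i; unfold bdP; split_ifs with h
    · exact hnn i h
    · exact le_refl 0
  have hP1 : ∀ i, bdP n p i ≤ 1 := by
    intro i; unfold bdP; split_ifs with h
    · exact hle1 i h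
    · norm_num
  have hPs : ∀ i, bdP n p i + bdP n p (i+1) ≤ 1 := by
    intro i; unfold bdP; split_ifs with h h'
    · exact hsum i h'
    · simpa using hle1 i h
    · exfalso; omega
    · norm_num
  have step := bdG_step n p hP0 hP1 hPs (ℓ:ℕ)
  have mono : ∀ t s : ℕ, s ≤ t → bdG n p (ℓ:ℕ) t ≤ bdG n p (ℓ:ℕ) s := by
    intro t
    induction t with
    | zero => intro s hs; have : s = 0 := by omega
              subst this; exact le_refl _
    | succ u ih =>
        intro s hs
        rcases Nat.lt_or_ge s (u+1) with h | h
        · exact le_trans (step u) (ih s (by omega))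
        · have : s = u + 1 := by omega
          subst this; exact le_refl _
  have ha := bdKKf n p hle1 ℓ (a:ℕ) a.isLt
  have hb := bdKKf n p hle1 ℓ (b:ℕ) b.isLt
  simp only [Fin.eta] at ha hb
  rw [ha, hb]
  exact mono (b:ℕ) (a:ℕ) hab
end

section
/- Let K₀ be the symmetric birth-and-death kernel on {0,...,n} with all p_i = 1/2, and let K be any symmetric birth-and-death kernel with p_i + p_{i+1} ≤ 1. Then K₀² ⪯ K² in the comparison-inequality order with respect to the uniform distribution: for all down-sets D = {0,...,ℓ}, E = {0,...,m}, ⟨K₀² 1_D, 1_E⟩ ≤ ⟨K² 1_D, 1_E⟩. -/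
open Finset

lemma bdK_symm (n : ℕ) (p : ℕ → ℝ) (i j : Fin (n+1)) : bdK n p i j = bdK n p j i := by
  unfold bdK
  simp only [Matrix.of_apply]
  rcases lt_trichotomy (i : ℕ) (j : ℕ) with h | h | h
  · rw [if_neg (show ¬ (i:ℕ) = (j:ℕ)+1 by omega),
      if_neg (show ¬ i = j from fun e => by simp [e] at h),
      if_neg (show ¬ j = i from fun e => by simp [e] at h)]
    rw [if_neg (show ¬ (i:ℕ) = (j:ℕ)+1 by omega)]
  · have : i = j := Fin.ext h
    rw [this]
  · rw [if_neg (show ¬ (j:ℕ) = (i:ℕ)+1 by omega),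
      if_neg (show ¬ i = j from fun e => by simp [e] at h),
      if_neg (show ¬ j = i from fun e => by simp [e] at h)]
    rw [if_neg (show ¬ (j:ℕ) = (i:ℕ)+1 by omega)]

lemma spike (n : ℕ) (c : ℕ) (a : ℝ) :
    ∑ k : Fin (n+1), (if (k : ℕ) = c then a else 0) = if c < n + 1 then a else 0 := by
  rw [Fin.sum_univ_eq_sum_range (fun t => if t = c then a else 0)]
  rw [Finset.sum_ite_eq' (Finset.range (n+1)) c (fun _ => a)]
  simp [Finset.mem_range]

lemma bdK_rowsum (n : ℕ) (p : ℕ → ℝ) (i : Fin (n+1)) : ∑ k, bdK n p i k = 1 := by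
  have hdecomp : ∀ k : Fin (n+1), bdK n p i k =
      (if (k : ℕ) = (i : ℕ) + 1 then p i else 0)
      + (if ((i : ℕ) ≠ 0 ∧ (k : ℕ) = (i : ℕ) - 1) then p ((i : ℕ) - 1) else 0)
      + (if (k : ℕ) = (i : ℕ) then
          1 - (if (i : ℕ) < n then p i else 0) - (if (i : ℕ) = 0 then 0 else p ((i : ℕ) - 1))
          else 0) := by
    intro k
    unfold bdK
    simp only [Matrix.of_apply]
    by_cases hA : (k : ℕ) = (i : ℕ) + 1
    · rw [if_pos hA, if_pos hA, if_neg (show ¬ ((i:ℕ) ≠ 0 ∧ (k:ℕ) = (i:ℕ)-1) by omega),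
        if_neg (show ¬ (k:ℕ) = (i:ℕ) by omega)]
      ring
    · rw [if_neg hA, if_neg hA]
      by_cases hB : (i : ℕ) = (k : ℕ) + 1
      · rw [if_pos hB, if_pos (show ((i:ℕ) ≠ 0 ∧ (k:ℕ) = (i:ℕ)-1) by omega),
          if_neg (show ¬ (k:ℕ) = (i:ℕ) by omega),
          show (k:ℕ) = (i:ℕ) - 1 by omega]
        ring
      · rw [if_neg hB, if_neg (show ¬ ((i:ℕ) ≠ 0 ∧ (k:ℕ) = (i:ℕ)-1) by omega)]
        by_cases hC : i = k
        · rw [if_pos hC, if_pos (show (k:ℕ) = (i:ℕ) from (congrArg Fin.val hC).symm)]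
          ring
        · rw [if_neg hC, if_neg (show ¬ (k:ℕ) = (i:ℕ) from fun e => hC (Fin.ext e.symm))]
          ring
  rw [Finset.sum_congr rfl (fun k _ => hdecomp k)]
  rw [Finset.sum_add_distrib, Finset.sum_add_distrib]
  have s1 : ∑ k : Fin (n+1), (if (k : ℕ) = (i : ℕ) + 1 then p i else 0)
      = if (i : ℕ) < n then p i else 0 := by
    rw [spike]
    by_cases hi : (i : ℕ) < n
    · rw [if_pos (show (i:ℕ)+1 < n+1 by omega), if_pos hi]
    · rw [if_neg (show ¬ (i:ℕ)+1 < n+1 by omega), if_neg hi]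
  have s2 : ∑ k : Fin (n+1), (if ((i : ℕ) ≠ 0 ∧ (k : ℕ) = (i : ℕ) - 1) then p ((i : ℕ) - 1) else 0)
      = if (i : ℕ) = 0 then 0 else p ((i : ℕ) - 1) := by
    by_cases hi : (i : ℕ) = 0
    · simp [hi]
    · simp only [hi, if_false, ne_eq, not_false_iff, true_and]
      rw [spike, if_pos (by omega)]
  have s3 : ∑ k : Fin (n+1), (if (k : ℕ) = (i : ℕ) then
      1 - (if (i : ℕ) < n then p i else 0) - (if (i : ℕ) = 0 then 0 else p ((i : ℕ) - 1))
      else 0) = 1 - (if (i : ℕ) < n then p i else 0) - (if (i : ℕ) = 0 then 0 else p ((i : ℕ) - 1)) := by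
    rw [spike, if_pos i.isLt]
  rw [s1, s2, s3]
  ring

lemma bdK_eq_zero (n : ℕ) (p : ℕ → ℝ) (i k : Fin (n+1)) (h1 : (k:ℕ) ≠ (i:ℕ)+1)
    (h2 : (i:ℕ) ≠ (k:ℕ)+1) (h3 : (i:ℕ) ≠ (k:ℕ)) : bdK n p i k = 0 := by
  unfold bdK
  rw [Matrix.of_apply, if_neg h1, if_neg h2, if_neg (fun e => h3 (congrArg Fin.val e))]

/-- explicit value of `K 1_{≤L}` -/
noncomputable def Fv (n : ℕ) (p : ℕ → ℝ) (L t : ℕ) : ℝ :=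
  if t < L then 1 else if t = L then 1 - (if L < n then p L else 0)
  else if t = L + 1 then p L else 0

lemma mulVec_ind (n : ℕ) (p : ℕ → ℝ) (ℓ : Fin (n+1)) (i : Fin (n+1)) :
    (bdK n p).mulVec (fun x => if x ≤ ℓ then (1:ℝ) else 0) i = Fv n p (ℓ:ℕ) (i:ℕ) := by
  have hmv : (bdK n p).mulVec (fun x => if x ≤ ℓ then (1:ℝ) else 0) i
      = ∑ k, bdK n p i k * (if (k:ℕ) ≤ (ℓ:ℕ) then (1:ℝ) else 0) := by
    simp only [Matrix.mulVec, dotProduct, Fin.le_def]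
  have hstep : ∀ k : Fin (n+1), bdK n p i k * (if (k:ℕ) ≤ (ℓ:ℕ) then (1:ℝ) else 0)
      = if (k:ℕ) ≤ (ℓ:ℕ) then bdK n p i k else 0 := by
    intro k; split_ifs <;> ring
  rw [hmv, Finset.sum_congr rfl (fun k _ => hstep k)]
  rcases lt_trichotomy (i:ℕ) (ℓ:ℕ) with hil | hil | hil
  · -- i < ℓ : sum is full row sum = 1
    have hpt : ∀ k : Fin (n+1), (if (k:ℕ) ≤ (ℓ:ℕ) then bdK n p i k else 0) = bdK n p i k := by
      intro k
      by_cases hk : (k:ℕ) ≤ (ℓ:ℕ)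
      · rw [if_pos hk]
      · rw [if_neg hk, bdK_eq_zero n p i k (by omega) (by omega) (by omega)]
    rw [Finset.sum_congr rfl (fun k _ => hpt k), bdK_rowsum, Fv, if_pos hil]
  · -- i = ℓ
    have hpt : ∀ k : Fin (n+1), (if (k:ℕ) ≤ (ℓ:ℕ) then bdK n p i k else 0)
        = bdK n p i k - (if (k:ℕ) = (i:ℕ)+1 then p i else 0) := by
      intro k
      by_cases hk : (k:ℕ) ≤ (ℓ:ℕ)
      · rw [if_pos hk, if_neg (show ¬ (k:ℕ) = (i:ℕ)+1 by omega)]; ring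
      · rw [if_neg hk]
        by_cases h2 : (k:ℕ) = (i:ℕ)+1
        · rw [if_pos h2]
          have : bdK n p i k = p i := by
            unfold bdK; rw [Matrix.of_apply, if_pos h2]
          rw [this]; ring
        · rw [if_neg h2, bdK_eq_zero n p i k h2 (by omega) (by omega)]; ring
    rw [Finset.sum_congr rfl (fun k _ => hpt k), Finset.sum_sub_distrib, bdK_rowsum, spike]
    rw [Fv, if_neg (show ¬ (i:ℕ) < (ℓ:ℕ) by omega), if_pos hil]
    by_cases hn : (i:ℕ) < n
    · rw [if_pos (show (i:ℕ)+1 < n+1 by omega), if_pos (hil ▸ hn), hil]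
    · rw [if_neg (show ¬ (i:ℕ)+1 < n+1 by omega), if_neg (hil ▸ hn)]
  · -- i > ℓ
    by_cases h1 : (i:ℕ) = (ℓ:ℕ)+1
    · have hpt : ∀ k : Fin (n+1), (if (k:ℕ) ≤ (ℓ:ℕ) then bdK n p i k else 0)
          = if (k:ℕ) = (ℓ:ℕ) then p (ℓ:ℕ) else 0 := by
        intro k
        by_cases hk : (k:ℕ) = (ℓ:ℕ)
        · rw [if_pos hk, if_pos (by omega)]
          have : bdK n p i k = p (k:ℕ) := by
            unfold bdK
            rw [Matrix.of_apply, if_neg (by omega), if_pos (by omega)]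
          rw [this, hk]
        · rw [if_neg hk]
          by_cases hk2 : (k:ℕ) ≤ (ℓ:ℕ)
          · rw [if_pos hk2, bdK_eq_zero n p i k (by omega) (by omega) (by omega)]
          · rw [if_neg hk2]
      rw [Finset.sum_congr rfl (fun k _ => hpt k), spike, if_pos (by omega)]
      rw [Fv, if_neg (by omega), if_neg (by omega), if_pos h1]
    · have hpt : ∀ k : Fin (n+1), (if (k:ℕ) ≤ (ℓ:ℕ) then bdK n p i k else 0) = 0 := by
        intro k
        by_cases hk : (k:ℕ) ≤ (ℓ:ℕ)
        · rw [if_pos hk, bdK_eq_zero n p i k (by omega) (by omega) (by omega)]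
        · rw [if_neg hk]
      rw [Finset.sum_congr rfl (fun k _ => hpt k), Finset.sum_const, Fv,
        if_neg (by omega), if_neg (by omega), if_neg h1]
      simp

lemma reduce (n : ℕ) (p : ℕ → ℝ) (ℓ m : Fin (n+1)) :
    ∑ j, ((bdK n p * bdK n p).mulVec (fun x => if x ≤ ℓ then (1:ℝ) else 0)) j *
      (if j ≤ m then (1:ℝ) else 0)
    = ∑ t ∈ Finset.range (n+1), Fv n p (ℓ:ℕ) t * Fv n p (m:ℕ) t := by
  have hw : (bdK n p).mulVec (fun x => if x ≤ ℓ then (1:ℝ) else 0)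
      = fun i : Fin (n+1) => Fv n p (ℓ:ℕ) (i:ℕ) := funext (mulVec_ind n p ℓ)
  have e1 : ∀ j : Fin (n+1),
      ((bdK n p * bdK n p).mulVec (fun x => if x ≤ ℓ then (1:ℝ) else 0)) j
      = ∑ i, bdK n p j i * Fv n p (ℓ:ℕ) (i:ℕ) := by
    intro j
    rw [← Matrix.mulVec_mulVec, hw]
    rfl
  have e2 : ∀ i : Fin (n+1),
      ∑ j, bdK n p i j * (if j ≤ m then (1:ℝ) else 0) = Fv n p (m:ℕ) (i:ℕ) := by
    intro i
    rw [← mulVec_ind n p m i]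
    rfl
  calc ∑ j, ((bdK n p * bdK n p).mulVec (fun x => if x ≤ ℓ then (1:ℝ) else 0)) j *
        (if j ≤ m then (1:ℝ) else 0)
      = ∑ j, ∑ i, bdK n p j i * Fv n p (ℓ:ℕ) (i:ℕ) * (if j ≤ m then (1:ℝ) else 0) := by
        refine Finset.sum_congr rfl fun j _ => ?_
        rw [e1 j, Finset.sum_mul]
    _ = ∑ i, ∑ j, bdK n p j i * Fv n p (ℓ:ℕ) (i:ℕ) * (if j ≤ m then (1:ℝ) else 0) :=
        Finset.sum_comm
    _ = ∑ i : Fin (n+1), Fv n p (ℓ:ℕ) (i:ℕ) * Fv n p (m:ℕ) (i:ℕ) := by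
        refine Finset.sum_congr rfl fun i _ => ?_
        rw [← e2 i, Finset.mul_sum]
        refine Finset.sum_congr rfl fun j _ => ?_
        rw [bdK_symm n p j i]
        ring
    _ = ∑ t ∈ Finset.range (n+1), Fv n p (ℓ:ℕ) t * Fv n p (m:ℕ) t :=
        Fin.sum_univ_eq_sum_range (fun t => Fv n p (ℓ:ℕ) t * Fv n p (m:ℕ) t) (n+1)

lemma Tform (n : ℕ) (p : ℕ → ℝ) (L M : ℕ) (hLM : L ≤ M) (hLn : L < n) :
    ∑ t ∈ Finset.range (n+1), Fv n p L t * Fv n p M t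
      = (L : ℝ) + (1 - p L) * Fv n p M L + p L * Fv n p M (L+1) := by
  have hsub : Finset.range (L+2) ⊆ Finset.range (n+1) := Finset.range_subset_range.2 (by omega)
  have hz : ∀ t ∈ Finset.range (n+1), t ∉ Finset.range (L+2) →
      Fv n p L t * Fv n p M t = 0 := by
    intro t _ hnt
    rw [Finset.mem_range] at hnt
    have h1 : ¬ t < L := by omega
    have h2 : ¬ t = L := by omega
    have h3 : ¬ t = L + 1 := by omega
    simp only [Fv]
    rw [if_neg h1, if_neg h2, if_neg h3, zero_mul]
  rw [← Finset.sum_subset hsub hz, Finset.sum_range_succ, Finset.sum_range_succ]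
  have hone : ∀ t ∈ Finset.range L, Fv n p L t * Fv n p M t = 1 := by
    intro t ht
    rw [Finset.mem_range] at ht
    simp only [Fv]
    rw [if_pos ht, if_pos (show t < M by omega), one_mul]
  rw [Finset.sum_congr rfl hone, Finset.sum_const, Finset.card_range]
  have hL : Fv n p L L = 1 - p L := by
    simp only [Fv]
    rw [if_neg (lt_irrefl L), if_pos trivial, if_pos hLn]
  have hL1 : Fv n p L (L+1) = p L := by
    simp only [Fv]
    rw [if_neg (show ¬ L+1 < L by omega), if_neg (show ¬ L+1 = L by omega), if_pos trivial]
  rw [hL, hL1]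
  push_cast
  ring

lemma key (n : ℕ) (p : ℕ → ℝ)
    (hnn : ∀ i, i < n → 0 ≤ p i)
    (hsum : ∀ i, i + 1 < n → p i + p (i + 1) ≤ 1)
    (L M : ℕ) (hLM : L ≤ M) (hM : M ≤ n) :
    ∑ t ∈ Finset.range (n+1), Fv n (fun _ => 1/2) L t * Fv n (fun _ => 1/2) M t
      ≤ ∑ t ∈ Finset.range (n+1), Fv n p L t * Fv n p M t := by
  rcases lt_or_eq_of_le (show L ≤ n by omega) with hLn | hLn
  swap
  · -- L = n, hence M = n: both sums have all terms 1
    have hM' : M = n := by omega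
    have h1 : ∀ (q : ℕ → ℝ) (t : ℕ), t < n + 1 → Fv n q n t = 1 := by
      intro q t ht
      simp only [Fv]
      by_cases h : t < n
      · rw [if_pos h]
      · rw [if_neg h, if_pos (by omega), if_neg (lt_irrefl n), sub_zero]
    apply le_of_eq
    refine Finset.sum_congr rfl fun t ht => ?_
    rw [Finset.mem_range] at ht
    rw [hLn, hM', h1 (fun _ => 1/2) _ ht, h1 p _ ht]
  · rw [Tform n p L M hLM hLn, Tform n (fun _ => 1/2) L M hLM hLn]
    rcases eq_or_lt_of_le hLM with hML | hML
    · -- M = L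
      subst hML
      have hA : ∀ q : ℕ → ℝ, Fv n q L L = 1 - q L := by
        intro q; simp only [Fv]
        rw [if_neg (lt_irrefl L), if_pos trivial, if_pos hLn]
      have hB : ∀ q : ℕ → ℝ, Fv n q L (L+1) = q L := by
        intro q; simp only [Fv]
        rw [if_neg (show ¬ L+1 < L by omega), if_neg (show ¬ L+1 = L by omega), if_pos trivial]
      rw [hA, hA, hB, hB]
      nlinarith [sq_nonneg (p L - 1/2)]
    · rcases eq_or_lt_of_le (show L+1 ≤ M by omega) with h1 | h1
      · -- M = L + 1
        have hFvL : ∀ q : ℕ → ℝ, Fv n q M L = 1 := by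
          intro q; simp only [Fv]; rw [if_pos (by omega)]
        have hFvM : ∀ q : ℕ → ℝ, Fv n q M (L+1) = 1 - (if M < n then q M else 0) := by
          intro q; simp only [Fv]
          rw [if_neg (show ¬ L+1 < M by omega), if_pos (by omega)]
        rw [hFvL, hFvL, hFvM, hFvM]
        by_cases hMn : M < n
        · rw [if_pos hMn, if_pos hMn]
          have h0L := hnn L hLn
          have h0M := hnn M hMn
          have hs := hsum L (by omega)
          rw [h1] at hs
          nlinarith [sq_nonneg (p L - p M)]
        · rw [if_neg hMn, if_neg hMn]
          nlinarith []
      · -- L + 2 ≤ M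
        have hF : ∀ (q : ℕ → ℝ) (t : ℕ), t ≤ L+1 → Fv n q M t = 1 := by
          intro q t ht; simp only [Fv]; rw [if_pos (by omega)]
        rw [hF _ _ (by omega), hF _ _ le_rfl, hF p _ (by omega), hF p _ le_rfl]
        nlinarith []


theorem stmt_11 {n : ℕ} (p : ℕ → ℝ)
    (hnn : ∀ i, i < n → 0 ≤ p i) (hle1 : ∀ i, i < n → p i ≤ 1)
    (hsum : ∀ i, i + 1 < n → p i + p (i + 1) ≤ 1) :
    ∀ ℓ m : Fin (n + 1),
      ∑ j, ((n : ℝ) + 1)⁻¹ *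
          (((bdK n (fun _ => 1 / 2) * bdK n (fun _ => 1 / 2)).mulVec
              (fun x => if x ≤ ℓ then (1 : ℝ) else 0)) j *
            (if j ≤ m then (1 : ℝ) else 0)) ≤
      ∑ j, ((n : ℝ) + 1)⁻¹ *
          (((bdK n p * bdK n p).mulVec (fun x => if x ≤ ℓ then (1 : ℝ) else 0)) j *
            (if j ≤ m then (1 : ℝ) else 0)) := by
  intro ℓ m
  rw [← Finset.mul_sum, ← Finset.mul_sum]
  have hc : (0:ℝ) ≤ ((n : ℝ) + 1)⁻¹ := by positivity
  refine mul_le_mul_of_nonneg_left ?_ hc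
  rw [reduce, reduce]
  rcases le_total (ℓ:ℕ) (m:ℕ) with h | h
  · exact key n p hnn hsum (ℓ:ℕ) (m:ℕ) h (by omega)
  · have comm : ∀ q : ℕ → ℝ,
        ∑ t ∈ Finset.range (n+1), Fv n q (ℓ:ℕ) t * Fv n q (m:ℕ) t
          = ∑ t ∈ Finset.range (n+1), Fv n q (m:ℕ) t * Fv n q (ℓ:ℕ) t :=
      fun q => Finset.sum_congr rfl fun t _ => mul_comm _ _
    rw [comm, comm]
    exact key n p hnn hsum (m:ℕ) (ℓ:ℕ) h (by omega)
end

section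
/- Let U be the uniform chain on {0,...,n} started at 0 (birth-and-death chain with transition probability 1/2 in each direction along each edge and holding 1/2 at the endpoints), and let σ_t be the pmf of U_t. Then for every t, σ_t is non-increasing on {0,...,n}, and σ_t(i) = σ_t(i+1) whenever t + i is odd (0 ≤ i ≤ n−1). -/
open Finset

/-- pmf at time `t` of the uniform chain on `{0,...,n}` started at `0`. -/
noncomputable def unifChain (n : ℕ) (t : ℕ) : Fin (n + 1) → ℝ :=
  Matrix.vecMul (fun j => if j = 0 then (1 : ℝ) else 0) (bdK n (fun _ => 1 / 2) ^ t)

lemma step (n t : ℕ) (j : Fin (n+1)) :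
    unifChain n (t+1) j = ∑ i : Fin (n+1), unifChain n t i * bdK n (fun _ => 1/2) i j := by
  simp only [unifChain, pow_succ, ← Matrix.vecMul_vecMul]
  rfl

lemma base (n : ℕ) (j : Fin (n+1)) : unifChain n 0 j = if j = 0 then 1 else 0 := by
  simp [unifChain]

lemma summand (n : ℕ) (f : Fin (n+1) → ℝ) (m : ℕ) (hm : m < n+1) (i : Fin (n+1)) :
    f i * bdK n (fun _ => 1/2) i ⟨m, hm⟩ =
      (if _ : 1 ≤ m then (if i = ⟨m-1, lt_of_le_of_lt (Nat.pred_le m) hm⟩ then f i * (1/2) else 0) else 0)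
      + (if i = ⟨m, hm⟩ then f i * ((1:ℝ) - (if m < n then 1/2 else 0) - (if m = 0 then 0 else 1/2)) else 0)
      + (if _ : m+1 < n+1 then (if i = ⟨m+1, ‹m+1 < n+1›⟩ then f i * (1/2) else 0) else 0) := by
  rcases i with ⟨k, hk⟩
  simp only [bdK, Matrix.of_apply, Fin.mk.injEq]
  split_ifs <;> (try (exfalso; omega)) <;> ring

lemma sum3 (n : ℕ) (f : Fin (n+1) → ℝ) (m : ℕ) (hm : m < n+1) :
    ∑ i : Fin (n+1), f i * bdK n (fun _ => 1/2) i ⟨m, hm⟩ =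
      (if _ : 1 ≤ m then f ⟨m-1, lt_of_le_of_lt (Nat.pred_le m) hm⟩ * (1/2) else 0)
      + f ⟨m, hm⟩ * ((1:ℝ) - (if m < n then 1/2 else 0) - (if m = 0 then 0 else 1/2))
      + (if _ : m+1 < n+1 then f ⟨m+1, ‹m+1 < n+1›⟩ * (1/2) else 0) := by
  simp only [summand n f m hm, Finset.sum_add_distrib]
  by_cases h1 : 1 ≤ m <;> by_cases h2 : m + 1 < n + 1 <;>
    simp [h1, h2, Finset.sum_ite_eq']

lemma rec0 {n : ℕ} (t : ℕ) (hn : 0 < n) (h0 : 0 < n+1) (h1 : 1 < n+1) :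
    unifChain n (t+1) ⟨0, h0⟩ =
      (unifChain n t ⟨0, h0⟩ + unifChain n t ⟨1, h1⟩) * (1/2) := by
  rw [step, sum3 n _ 0 h0]
  rw [dif_neg (by omega), dif_pos (show 0+1 < n+1 by omega), if_pos hn, if_pos rfl]
  ring

lemma recMid {n : ℕ} (t m : ℕ) (hm0 : 0 < m) (hmn : m < n) (hm : m < n+1)
    (ha : m-1 < n+1) (hb : m+1 < n+1) :
    unifChain n (t+1) ⟨m, hm⟩ =
      (unifChain n t ⟨m-1, ha⟩ + unifChain n t ⟨m+1, hb⟩) * (1/2) := by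
  rw [step, sum3 n _ m hm]
  rw [dif_pos (show 1 ≤ m by omega), dif_pos (show m+1 < n+1 by omega), if_pos hmn, if_neg (by omega)]
  ring

lemma recN {n : ℕ} (t : ℕ) (hn : 0 < n) (hm : n < n+1) (ha : n-1 < n+1) :
    unifChain n (t+1) ⟨n, hm⟩ =
      (unifChain n t ⟨n-1, ha⟩ + unifChain n t ⟨n, hm⟩) * (1/2) := by
  rw [step, sum3 n _ n hm]
  rw [dif_pos (show 1 ≤ n by omega), dif_neg (by omega), if_neg (by omega), if_neg (by omega)]
  ring

theorem stmt_12 {n : ℕ} :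
    ∀ t : ℕ, Antitone (unifChain n t) ∧
      ∀ i : ℕ, (hi : i < n) → Odd (t + i) →
        unifChain n t ⟨i, Nat.lt_succ_of_lt hi⟩ = unifChain n t ⟨i + 1, Nat.succ_lt_succ hi⟩ := by
  intro t
  induction t with
  | zero =>
    constructor
    · intro a b hab
      rw [base, base]
      by_cases hb : b = 0
      · have ha : a = 0 := le_antisymm (hb ▸ hab) (Fin.zero_le a)
        simp [ha, hb]
      · by_cases ha : a = 0 <;> simp [ha, hb]
    · intro i hi hodd
      have hi0 : i ≠ 0 := by rintro rfl; simp at hodd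
      rw [base, base, if_neg (by simp [Fin.ext_iff]; try omega), if_neg (by simp [Fin.ext_iff]; try omega)]
  | succ t ih =>
    obtain ⟨mono, par⟩ := ih
    have adj : ∀ i (hi : i < n),
        unifChain n (t+1) ⟨i+1, Nat.succ_lt_succ hi⟩ ≤ unifChain n (t+1) ⟨i, Nat.lt_succ_of_lt hi⟩ := by
      intro i hi
      have hn : 0 < n := by omega
      rcases Nat.eq_zero_or_pos i with rfl | hi0
      · -- i = 0
        rcases Nat.lt_or_ge 1 n with h1n | h1n
        · -- n ≥ 2
          rw [rec0 t hn (by omega) (by omega),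
            recMid t 1 (by omega) h1n (by omega) (by omega) (by omega)]
          have := mono (show (⟨1, by omega⟩ : Fin (n+1)) ≤ ⟨2, by omega⟩ from by
            simp [Fin.mk_le_mk])
          simp only [show (1:ℕ)-1 = 0 from rfl, show (1:ℕ)+1 = 2 from rfl]
          nlinarith
        · -- n = 1
          have hn1 : n = 1 := by omega
          subst hn1
          rw [rec0 t hn (by omega) (by omega), recN t hn (by omega) (by omega)]
      · -- i > 0
        rcases Nat.lt_or_ge (i+1) n with h1n | h1n
        · rw [recMid t i hi0 hi (by omega) (by omega) (by omega),
            recMid t (i+1) (by omega) h1n (by omega) (by omega) (by omega)]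
          have m1 := mono (show (⟨i-1, by omega⟩ : Fin (n+1)) ≤ ⟨i, by omega⟩ from by
            simp [Fin.mk_le_mk]; try omega)
          have m2 := mono (show (⟨i+1, by omega⟩ : Fin (n+1)) ≤ ⟨i+2, by omega⟩ from by
            simp [Fin.mk_le_mk])
          simp only [Nat.add_sub_cancel]
          nlinarith
        · have hin : i + 1 = n := by omega
          subst hin
          rw [recMid t i hi0 hi (by omega) (by omega) (by omega),
            recN t hn (by omega) (by omega)]
          have m1 := mono (show (⟨i-1, by omega⟩ : Fin (i+1+1)) ≤ ⟨i, by omega⟩ from by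
            simp [Fin.mk_le_mk]; try omega)
          simp only [Nat.add_sub_cancel]
          nlinarith
    constructor
    · rw [Fin.antitone_iff_succ_le]
      intro i
      obtain ⟨i, hi⟩ := i
      have := adj i hi
      simpa [Fin.succ_mk, Fin.castSucc_mk] using this
    · intro i hi hodd
      have hn : 0 < n := by omega
      rcases Nat.eq_zero_or_pos i with rfl | hi0
      · rcases Nat.lt_or_ge 1 n with h1n | h1n
        · rw [rec0 t hn (by omega) (by omega),
            recMid t 1 (by omega) h1n (by omega) (by omega) (by omega)]
          have heq := par 1 h1n (by simpa using hodd)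
          simp only [show (1:ℕ)-1 = 0 from rfl, show (1:ℕ)+1 = 2 from rfl] at *
          rw [heq]
        · have hn1 : n = 1 := by omega
          subst hn1
          rw [rec0 t hn (by omega) (by omega), recN t hn (by omega) (by omega)]
      · rcases Nat.lt_or_ge (i+1) n with h1n | h1n
        · rw [recMid t i hi0 hi (by omega) (by omega) (by omega),
            recMid t (i+1) (by omega) h1n (by omega) (by omega) (by omega)]
          obtain ⟨j, rfl⟩ : ∃ j, i = j + 1 := ⟨i - 1, by omega⟩
          have h1 := par j (by omega) (by
            have : Odd (t + j) := by
              rcases hodd with ⟨c, hc⟩; exact ⟨c - 1, by omega⟩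
            exact this)
          have h2 := par (j+1+1) (by omega) (by
            rcases hodd with ⟨c, hc⟩; exact ⟨c, by omega⟩)
          simp only [Nat.add_sub_cancel] at *
          rw [h1, h2]
        · have hin : i + 1 = n := by omega
          subst hin
          rw [recMid t i hi0 hi (by omega) (by omega) (by omega),
            recN t hn (by omega) (by omega)]
          obtain ⟨j, rfl⟩ : ∃ j, i = j + 1 := ⟨i - 1, by omega⟩
          have h1 := par j (by omega) (by
            rcases hodd with ⟨c, hc⟩; exact ⟨c - 1, by omega⟩)
          simp only [Nat.add_sub_cancel] at *
          rw [h1]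
end

section
/- Let π be a log-concave positive pmf on {0,...,n} (π_i² ≥ π_{i−1}π_{i+1} for 0 < i < n). Define the kernel K_π with death, hold, birth probabilities q_i = π_{i−1}/(π_{i−1}+π_i), r_i = (π_i² − π_{i−1}π_{i+1})/((π_{i−1}+π_i)(π_i+π_{i+1})), p_i = π_{i+1}/(π_i+π_{i+1}) (with π_{−1} = π_{n+1} = 0). Then K_π is a stochastically monotone birth-and-death Markov kernel reversible with stationary distribution π, and K_π ⪯ K for every stochastically monotone birth-and-death kernel K with stationary distribution π. -/
/-!
For down-sets `D = {0, ..., l}`, `E = {0, ..., m}` and a birth-and-death kernel `K` with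
stationary distribution `π`, the form `⟨K 1_D, 1_E⟩_π` depends on `K` only when `l = m`: for
`m < l` every row indexed by `E` puts all its mass on `D`, giving `π(E)`, and for `l < m` no row
outside `E` reaches `D`, so stationarity gives `π(D)`. For `l = m < n` it is `π(D)` minus the flow
`π_l K(l, l+1)` across the cut between `l` and `l + 1`. Stationarity balances this flow,
`π_l K(l, l+1) = π_{l+1} K(l+1, l)`, and stochastic monotonicity means
`K(l, l+1) + K(l+1, l) ≤ 1`; together they bound the flow by `π_l π_{l+1} / (π_l + π_{l+1})`,
which `K_π` attains. Log-concavity of `π` is what makes the holding probabilities of `K_π`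
nonnegative.
-/

open Finset

/-- The fastest-mixing kernel `K_π` for a pmf `π` on `{0,...,n}`: death, hold, birth
probabilities `q_i = π_{i-1}/(π_{i-1}+π_i)`, `r_i = (π_i² - π_{i-1}π_{i+1})/((π_{i-1}+π_i)(π_i+π_{i+1}))`,
`p_i = π_{i+1}/(π_i+π_{i+1})`, with the conventions `π_{-1} = π_{n+1} = 0`.
(Here `pe k` stands for `π_{k-1}`, extended by zero.) -/
noncomputable def Kpi (n : ℕ) (π : ℕ → ℝ) : Matrix (Fin (n + 1)) (Fin (n + 1)) ℝ :=
  Matrix.of fun i j =>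
    let pe : ℕ → ℝ := fun k => if 1 ≤ k ∧ k ≤ n + 1 then π (k - 1) else 0
    if (j : ℕ) = (i : ℕ) + 1 then pe ((i : ℕ) + 2) / (pe ((i : ℕ) + 1) + pe ((i : ℕ) + 2))
    else if (i : ℕ) = (j : ℕ) + 1 then pe (i : ℕ) / (pe (i : ℕ) + pe ((i : ℕ) + 1))
    else if i = j then
      (pe ((i : ℕ) + 1) ^ 2 - pe (i : ℕ) * pe ((i : ℕ) + 2)) /
        ((pe (i : ℕ) + pe ((i : ℕ) + 1)) * (pe ((i : ℕ) + 1) + pe ((i : ℕ) + 2)))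
    else 0

open scoped Matrix

section Stochastic

variable {ι : Type*} [Fintype ι] (w : ι → ℝ) (K : Matrix ι ι ℝ)

lemma mulVec_indicator_apply [DecidableEq ι] (D : Finset ι) (j : ι) :
    (K *ᵥ fun x => if x ∈ D then (1 : ℝ) else 0) j = ∑ k ∈ D, K j k := by
  simp [Matrix.mulVec, dotProduct, sum_ite_mem]

lemma sum_mul_mulVec_indicator [DecidableEq ι] (D E : Finset ι) :
    ∑ j, w j * ((K *ᵥ fun x => if x ∈ D then (1 : ℝ) else 0) j * (if j ∈ E then (1 : ℝ) else 0))
      = ∑ j ∈ E, w j * ∑ k ∈ D, K j k := by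
  simp [mulVec_indicator_apply, sum_ite_mem]

lemma mulVec_sub_eq_sum (hrow : ∀ i, ∑ j, K i j = 1) (f : ι → ℝ) (i : ι) :
    (K *ᵥ f) i - f i = ∑ k, K i k * (f k - f i) := by
  simp [Matrix.mulVec, dotProduct, mul_sub, sum_sub_distrib, ← sum_mul, hrow]

lemma stationary_of_reversible (hrow : ∀ i, ∑ j, K i j = 1)
    (hrev : ∀ i j, w i * K i j = w j * K j i) (j : ι) : ∑ i, w i * K i j = w j := by
  simp_rw [hrev _ j, ← mul_sum, hrow, mul_one]

lemma sum_mul_sum_row_of_stationary (hst : ∀ k, ∑ j, w j * K j k = w k) (D : Finset ι) :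
    ∑ j, w j * ∑ k ∈ D, K j k = ∑ k ∈ D, w k := by
  simp_rw [mul_sum]
  rw [sum_comm]
  exact sum_congr rfl fun k _ => hst k

lemma sum_mul_sum_self_eq [DecidableEq ι] (hrow : ∀ i, ∑ j, K i j = 1) (S : Finset ι) :
    ∑ j ∈ S, w j * ∑ k ∈ S, K j k = ∑ j ∈ S, w j - ∑ j ∈ S, w j * ∑ k ∈ Sᶜ, K j k := by
  rw [← sum_sub_distrib]
  refine sum_congr rfl fun j _ => ?_
  have hsplit := sum_compl_add_sum S (K j)
  rw [hrow] at hsplit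
  linear_combination w j * hsplit

lemma sum_mul_sum_compl_eq [DecidableEq ι] (hrow : ∀ i, ∑ j, K i j = 1)
    (hst : ∀ k, ∑ j, w j * K j k = w k) (S : Finset ι) :
    ∑ j ∈ S, w j * ∑ k ∈ Sᶜ, K j k = ∑ j ∈ Sᶜ, w j * ∑ k ∈ S, K j k := by
  have hself := sum_mul_sum_self_eq w K hrow S
  have hsplit := sum_compl_add_sum S fun j => w j * ∑ k ∈ S, K j k
  rw [sum_mul_sum_row_of_stationary w K hst] at hsplit
  linarith

end Stochastic

def IsStochMonotone {ι : Type*} [Fintype ι] [Preorder ι] (K : Matrix ι ι ℝ) : Prop :=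
  ∀ f : ι → ℝ, (∀ i, 0 ≤ f i) → Antitone f → Antitone (K *ᵥ f)

lemma Finset.eq_Iic_max'_of_isLowerSet {α : Type*} [LinearOrder α] [LocallyFiniteOrderBot α]
    {D : Finset α} (hD : IsLowerSet (D : Set α)) (hne : D.Nonempty) : D = Iic (D.max' hne) := by
  ext j
  exact ⟨fun h => mem_Iic.2 (D.le_max' j h), fun h => hD (mem_Iic.1 h) (D.max'_mem hne)⟩

lemma Fin.sum_ite_val_eq {n : ℕ} {M : Type*} [AddCommMonoid M] (k : ℕ) (c : M) :
    ∑ j : Fin (n + 1), (if (j : ℕ) = k then c else 0) = if k ≤ n then c else 0 := by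
  simp [Fin.sum_univ_eq_sum_range (fun j => if j = k then c else 0)]

lemma mul_le_mul_div_add_of_balance {x y p q : ℝ} (hx : 0 < x) (hy : 0 < y)
    (hbal : x * p = y * q) (hpq : p + q ≤ 1) : x * p ≤ x * (y / (x + y)) := by
  rw [← mul_div_assoc, le_div_iff₀ (by positivity)]
  nlinarith [mul_le_mul_of_nonneg_left hpq (mul_nonneg hx.le hy.le)]

section BirthDeath

variable {n : ℕ}

def IsBirthDeath (K : Matrix (Fin (n + 1)) (Fin (n + 1)) ℝ) : Prop :=
  ∀ i j : Fin (n + 1), ((i : ℕ) + 1 < (j : ℕ) ∨ (j : ℕ) + 1 < (i : ℕ)) → K i j = 0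

namespace IsBirthDeath

variable {K : Matrix (Fin (n + 1)) (Fin (n + 1)) ℝ}

lemma sum_Iic_eq_one (hK : IsBirthDeath K) (hrow : ∀ i, ∑ j, K i j = 1) {j l : Fin (n + 1)}
    (h : j < l) : ∑ k ∈ Iic l, K j k = 1 := by
  rw [← hrow j]
  refine sum_subset (subset_univ _) fun k _ hk => hK j k (.inl ?_)
  rw [mem_Iic, not_le] at hk
  omega

lemma sum_Iic_eq_zero (hK : IsBirthDeath K) {j l : Fin (n + 1)} (h : (l : ℕ) + 1 < j) :
    ∑ k ∈ Iic l, K j k = 0 :=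
  sum_eq_zero fun k hk => hK j k (.inr (by rw [mem_Iic] at hk; omega))

lemma sum_compl_Iic_eq_zero (hK : IsBirthDeath K) {j l : Fin (n + 1)} (h : j < l) :
    ∑ k ∈ (Iic l)ᶜ, K j k = 0 :=
  sum_eq_zero fun k hk => hK j k (.inl (by rw [mem_compl, mem_Iic, not_le] at hk; omega))

lemma sum_compl_Iic_castSucc (hK : IsBirthDeath K) (i : Fin n) :
    ∑ k ∈ (Iic i.castSucc)ᶜ, K i.castSucc k = K i.castSucc i.succ := by
  refine sum_eq_single_of_mem _ (by simp) fun k hk hne => hK _ k (.inl ?_)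
  simp only [mem_compl, mem_Iic, not_le, Fin.lt_def, Ne, Fin.ext_iff, Fin.val_castSucc,
    Fin.val_succ] at hk hne ⊢
  omega

lemma sum_Iic_castSucc_succ (hK : IsBirthDeath K) (i : Fin n) :
    ∑ k ∈ Iic i.castSucc, K i.succ k = K i.succ i.castSucc := by
  refine sum_eq_single_of_mem _ (mem_Iic.2 le_rfl) fun k hk hne => hK _ k (.inr ?_)
  simp only [mem_Iic, Fin.le_def, Ne, Fin.ext_iff, Fin.val_castSucc, Fin.val_succ] at hk hne ⊢
  omega

lemma sum_Iic_mul_sum_compl_Iic (hK : IsBirthDeath K) (w : Fin (n + 1) → ℝ) (i : Fin n) :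
    ∑ j ∈ Iic i.castSucc, w j * ∑ k ∈ (Iic i.castSucc)ᶜ, K j k =
      w i.castSucc * K i.castSucc i.succ := by
  rw [sum_eq_single_of_mem _ (mem_Iic.2 le_rfl), hK.sum_compl_Iic_castSucc]
  intro j hj hne
  rw [hK.sum_compl_Iic_eq_zero (lt_of_le_of_ne (mem_Iic.1 hj) hne), mul_zero]

lemma sum_compl_Iic_mul_sum_Iic (hK : IsBirthDeath K) (w : Fin (n + 1) → ℝ) (i : Fin n) :
    ∑ j ∈ (Iic i.castSucc)ᶜ, w j * ∑ k ∈ Iic i.castSucc, K j k =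
      w i.succ * K i.succ i.castSucc := by
  rw [sum_eq_single_of_mem i.succ (by simp), hK.sum_Iic_castSucc_succ]
  intro j hj hne
  simp only [mem_compl, mem_Iic, not_le, Fin.lt_def, Ne, Fin.ext_iff, Fin.val_castSucc,
    Fin.val_succ] at hj hne
  rw [hK.sum_Iic_eq_zero (by rw [Fin.val_castSucc]; omega), mul_zero]

lemma balance (hK : IsBirthDeath K) {w : Fin (n + 1) → ℝ} (hrow : ∀ i, ∑ j, K i j = 1)
    (hst : ∀ k, ∑ j, w j * K j k = w k) (i : Fin n) :
    w i.castSucc * K i.castSucc i.succ = w i.succ * K i.succ i.castSucc := by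
  rw [← hK.sum_Iic_mul_sum_compl_Iic, ← hK.sum_compl_Iic_mul_sum_Iic]
  exact sum_mul_sum_compl_eq w K hrow hst _

lemma reversible_of_balance (hK : IsBirthDeath K) {w : Fin (n + 1) → ℝ}
    (h : ∀ i : Fin n, w i.castSucc * K i.castSucc i.succ = w i.succ * K i.succ i.castSucc)
    (i j : Fin (n + 1)) : w i * K i j = w j * K j i := by
  wlog hij : i ≤ j generalizing i j
  · exact (this j i (le_of_not_ge hij)).symm
  rcases hij.lt_or_eq with hlt | rfl
  · by_cases hadj : (j : ℕ) = i + 1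
    · obtain ⟨k, rfl, rfl⟩ : ∃ k : Fin n, i = k.castSucc ∧ j = k.succ :=
        ⟨⟨i, by omega⟩, rfl, Fin.ext (by simp [hadj])⟩
      exact h k
    · rw [hK i j (.inl (by omega)), hK j i (.inr (by omega)), mul_zero, mul_zero]
  · rfl

lemma le_sum_mul_sub_castSucc (hK : IsBirthDeath K) (hK0 : ∀ i j, 0 ≤ K i j)
    {f : Fin (n + 1) → ℝ} (hf : Antitone f) (i : Fin n) :
    K i.castSucc i.succ * (f i.succ - f i.castSucc) ≤
      ∑ k, K i.castSucc k * (f k - f i.castSucc) := by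
  rw [← add_sum_erase _ _ (mem_univ i.succ)]
  refine le_add_of_nonneg_right (sum_nonneg fun k hk => ?_)
  rcases le_or_gt k i.castSucc with hle | hgt
  · exact mul_nonneg (hK0 _ _) (sub_nonneg.2 (hf hle))
  · simp only [mem_erase, Ne, Fin.ext_iff, Fin.lt_def, Fin.val_castSucc, Fin.val_succ] at hk hgt
    rw [hK _ k (.inl (by rw [Fin.val_castSucc]; omega)), zero_mul]

lemma sum_mul_sub_succ_le (hK : IsBirthDeath K) (hK0 : ∀ i j, 0 ≤ K i j)
    {f : Fin (n + 1) → ℝ} (hf : Antitone f) (i : Fin n) :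
    ∑ k, K i.succ k * (f k - f i.succ) ≤ K i.succ i.castSucc * (f i.castSucc - f i.succ) := by
  rw [← add_sum_erase _ _ (mem_univ i.castSucc)]
  refine add_le_of_nonpos_right (sum_nonpos fun k hk => ?_)
  rcases le_or_gt i.succ k with hle | hlt
  · exact mul_nonpos_of_nonneg_of_nonpos (hK0 _ _) (sub_nonpos.2 (hf hle))
  · simp only [mem_erase, Ne, Fin.ext_iff, Fin.lt_def, Fin.val_castSucc, Fin.val_succ] at hk hlt
    rw [hK _ k (.inr (by rw [Fin.val_succ]; omega)), zero_mul]

lemma isStochMonotone_iff (hK : IsBirthDeath K) (hK0 : ∀ i j, 0 ≤ K i j)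
    (hrow : ∀ i, ∑ j, K i j = 1) :
    IsStochMonotone K ↔ ∀ i : Fin n, K i.castSucc i.succ + K i.succ i.castSucc ≤ 1 := by
  constructor
  · intro hmono i
    have hanti : Antitone fun x : Fin (n + 1) => if x ∈ Iic i.castSucc then (1 : ℝ) else 0 := by
      intro x y hxy
      by_cases hy : y ∈ Iic i.castSucc
      · simp [hy, mem_Iic.2 (hxy.trans (mem_Iic.1 hy))]
      · simp only [hy, if_false]
        split_ifs <;> norm_num
    have h := hmono _ (fun x => by split_ifs <;> norm_num) hanti (Fin.castSucc_lt_succ (i := i)).le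
    rw [mulVec_indicator_apply, mulVec_indicator_apply, hK.sum_Iic_castSucc_succ] at h
    have hsplit := sum_compl_add_sum (Iic i.castSucc) (K i.castSucc)
    rw [hrow, hK.sum_compl_Iic_castSucc] at hsplit
    linarith
  · intro h f _ hf
    refine Fin.antitone_iff_succ_le.2 fun i => ?_
    have hlow := hK.le_sum_mul_sub_castSucc hK0 hf i
    have hup := hK.sum_mul_sub_succ_le hK0 hf i
    rw [← mulVec_sub_eq_sum K hrow] at hlow hup
    have hstep := hf (Fin.castSucc_lt_succ (i := i)).le
    nlinarith [mul_nonneg (sub_nonneg.2 (h i)) (sub_nonneg.2 hstep)]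

lemma sum_Iic_mul_sum_Iic_of_lt (hK : IsBirthDeath K) {w : Fin (n + 1) → ℝ}
    (hst : ∀ k, ∑ j, w j * K j k = w k) {l m : Fin (n + 1)} (h : l < m) :
    ∑ j ∈ Iic m, w j * ∑ k ∈ Iic l, K j k = ∑ k ∈ Iic l, w k := by
  rw [← sum_mul_sum_row_of_stationary w K hst]
  refine sum_subset (subset_univ _) fun j _ hj => ?_
  rw [hK.sum_Iic_eq_zero (by rw [mem_Iic, not_le] at hj; omega), mul_zero]

lemma sum_Iic_mul_sum_Iic_of_gt (hK : IsBirthDeath K) {w : Fin (n + 1) → ℝ}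
    (hrow : ∀ i, ∑ j, K i j = 1) {l m : Fin (n + 1)} (h : m < l) :
    ∑ j ∈ Iic m, w j * ∑ k ∈ Iic l, K j k = ∑ j ∈ Iic m, w j :=
  sum_congr rfl fun j hj => by rw [hK.sum_Iic_eq_one hrow ((mem_Iic.1 hj).trans_lt h), mul_one]

end IsBirthDeath

end BirthDeath

section Kpi

variable {n : ℕ} {π : ℕ → ℝ}

/-- `π_{k-1}`, extended by zero: the function `pe` in the definition of `Kpi`. -/
noncomputable def piPred (n : ℕ) (π : ℕ → ℝ) (k : ℕ) : ℝ :=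
  if 1 ≤ k ∧ k ≤ n + 1 then π (k - 1) else 0

lemma piPred_zero : piPred n π 0 = 0 := by simp [piPred]

lemma piPred_of_lt {k : ℕ} (hk : n + 1 < k) : piPred n π k = 0 := by
  simp [piPred, show ¬k ≤ n + 1 by omega]

lemma piPred_succ {k : ℕ} (hk : k ≤ n) : piPred n π (k + 1) = π k := by
  simp [piPred, hk]

lemma piPred_nonneg (hπ : ∀ i ≤ n, 0 ≤ π i) (k : ℕ) : 0 ≤ piPred n π k := by
  unfold piPred
  split_ifs with hk
  · exact hπ _ (by omega)
  · exact le_rfl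

lemma piPred_sq_sub_mul_nonneg (hlc : ∀ i, 1 ≤ i → i < n → π (i - 1) * π (i + 1) ≤ π i ^ 2)
    {k : ℕ} (hk : k ≤ n) : 0 ≤ piPred n π (k + 1) ^ 2 - piPred n π k * piPred n π (k + 2) := by
  rcases Nat.eq_zero_or_pos k with rfl | hk0
  · simp [piPred_zero, sq_nonneg]
  rcases hk.lt_or_eq with hkn | rfl
  · obtain ⟨i, rfl⟩ : ∃ i, k = i + 1 := ⟨k - 1, by omega⟩
    rw [piPred_succ hk, piPred_succ (by omega), piPred_succ hkn]
    simpa using hlc (i + 1) (by omega) hkn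
  · simp [piPred_of_lt (show k + 1 < k + 2 by omega), sq_nonneg]

lemma Kpi_apply (i j : Fin (n + 1)) :
    Kpi n π i j =
      if (j : ℕ) = i + 1 then piPred n π (i + 2) / (piPred n π (i + 1) + piPred n π (i + 2))
      else if (i : ℕ) = j + 1 then piPred n π i / (piPred n π i + piPred n π (i + 1))
      else if i = j then
        (piPred n π (i + 1) ^ 2 - piPred n π i * piPred n π (i + 2)) /
          ((piPred n π i + piPred n π (i + 1)) * (piPred n π (i + 1) + piPred n π (i + 2)))
      else 0 := rfl

lemma Kpi_castSucc_succ (i : Fin n) :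
    Kpi n π i.castSucc i.succ = π (i + 1) / (π i + π (i + 1)) := by
  rw [Kpi_apply, if_pos (by simp), Fin.val_castSucc, piPred_succ (by omega),
    piPred_succ (by omega)]

lemma Kpi_succ_castSucc (i : Fin n) :
    Kpi n π i.succ i.castSucc = π i / (π i + π (i + 1)) := by
  rw [Kpi_apply, if_neg (by simp only [Fin.val_castSucc, Fin.val_succ]; omega), if_pos (by simp),
    Fin.val_succ, piPred_succ (by omega), piPred_succ (by omega)]

lemma Kpi_isBirthDeath : IsBirthDeath (Kpi n π) := fun i j h => by
  rw [Kpi_apply, if_neg (by omega), if_neg (by omega), if_neg (by rintro rfl; omega)]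

lemma Kpi_nonneg (hπ : ∀ i ≤ n, 0 ≤ π i)
    (hlc : ∀ i, 1 ≤ i → i < n → π (i - 1) * π (i + 1) ≤ π i ^ 2) (i j : Fin (n + 1)) :
    0 ≤ Kpi n π i j := by
  have h := piPred_nonneg hπ
  rw [Kpi_apply]
  split_ifs
  · exact div_nonneg (h _) (add_nonneg (h _) (h _))
  · exact div_nonneg (h _) (add_nonneg (h _) (h _))
  · exact div_nonneg (piPred_sq_sub_mul_nonneg hlc i.is_le)
      (mul_nonneg (add_nonneg (h _) (h _)) (add_nonneg (h _) (h _)))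
  · exact le_rfl

lemma Kpi_sum_row (hπ : ∀ i ≤ n, 0 < π i) (i : Fin (n + 1)) : ∑ j, Kpi n π i j = 1 := by
  set x := piPred n π i with hx
  set y := piPred n π (i + 1) with hy
  set z := piPred n π (i + 2) with hz
  have hy0 : 0 < y := by rw [hy, piPred_succ i.is_le]; exact hπ i i.is_le
  have hx0 : 0 ≤ x := piPred_nonneg (fun i hi => (hπ i hi).le) _
  have hz0 : 0 ≤ z := piPred_nonneg (fun i hi => (hπ i hi).le) _
  -- the death term vanishes at `i = 0`, so it may be placed at `i - 1` in all cases
  have hsplit : ∀ j : Fin (n + 1), Kpi n π i j =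
      (if (j : ℕ) = i + 1 then z / (y + z) else 0) + (if (j : ℕ) = i - 1 then x / (x + y) else 0)
        + (if j = i then (y ^ 2 - x * z) / ((x + y) * (y + z)) else 0) := by
    intro j
    have hx_zero : (i : ℕ) = 0 → x = 0 := fun h => by rw [hx, h, piPred_zero]
    rw [Kpi_apply, ← hx, ← hy, ← hz]
    split_ifs <;> simp only [Fin.ext_iff] at * <;>
      first | ring1 | omega | (rw [hx_zero (by omega)]; simp)
  have hbirth : (if (i : ℕ) + 1 ≤ n then z / (y + z) else 0) = z / (y + z) := by
    split_ifs with hi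
    · rfl
    · rw [hz, piPred_of_lt (by omega), zero_div]
  rw [sum_congr rfl fun j _ => hsplit j, sum_add_distrib, sum_add_distrib, Fin.sum_ite_val_eq,
    Fin.sum_ite_val_eq, hbirth, if_pos (by omega), sum_ite_eq', if_pos (mem_univ _)]
  field_simp
  ring

lemma Kpi_reversible (i j : Fin (n + 1)) : π i * Kpi n π i j = π j * Kpi n π j i :=
  Kpi_isBirthDeath.reversible_of_balance (w := fun k => π k) (fun k => by
    simp only [Kpi_castSucc_succ, Kpi_succ_castSucc, Fin.val_castSucc, Fin.val_succ]
    ring) i j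

lemma Kpi_isStochMonotone (hπ : ∀ i ≤ n, 0 < π i)
    (hlc : ∀ i, 1 ≤ i → i < n → π (i - 1) * π (i + 1) ≤ π i ^ 2) :
    IsStochMonotone (Kpi n π) := by
  refine (Kpi_isBirthDeath.isStochMonotone_iff (Kpi_nonneg (fun i hi => (hπ i hi).le) hlc)
    (Kpi_sum_row hπ)).2 fun i => ?_
  rw [Kpi_castSucc_succ, Kpi_succ_castSucc, ← add_div, add_comm,
    div_self (add_pos (hπ _ i.is_lt.le) (hπ _ i.is_lt)).ne']

lemma Kpi_stationary (hπ : ∀ i ≤ n, 0 < π i) (j : Fin (n + 1)) :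
    ∑ i : Fin (n + 1), π i * Kpi n π i j = π j :=
  stationary_of_reversible (fun k : Fin (n + 1) => π k) _ (Kpi_sum_row hπ) Kpi_reversible j

end Kpi

section Comparison

variable {n : ℕ} {π : ℕ → ℝ} {K : Matrix (Fin (n + 1)) (Fin (n + 1)) ℝ}

lemma sum_Iic_mul_sum_compl_Iic_le_Kpi (hπ : ∀ i ≤ n, 0 < π i) (hK0 : ∀ i j, 0 ≤ K i j)
    (hrow : ∀ i, ∑ j, K i j = 1) (hK : IsBirthDeath K)
    (hst : ∀ j : Fin (n + 1), ∑ i : Fin (n + 1), π i * K i j = π j) (hmono : IsStochMonotone K)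
    (l : Fin (n + 1)) :
    ∑ j ∈ Iic l, π j * ∑ k ∈ (Iic l)ᶜ, K j k ≤ ∑ j ∈ Iic l, π j * ∑ k ∈ (Iic l)ᶜ, Kpi n π j k := by
  obtain ⟨i, rfl⟩ | rfl := l.eq_castSucc_or_eq_last
  · rw [hK.sum_Iic_mul_sum_compl_Iic (fun j => π j),
      Kpi_isBirthDeath.sum_Iic_mul_sum_compl_Iic (fun j => π j), Kpi_castSucc_succ]
    simp only [Fin.val_castSucc]
    exact mul_le_mul_div_add_of_balance (hπ _ i.is_lt.le) (hπ _ i.is_lt)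
      (by simpa using hK.balance hrow hst i) ((hK.isStochMonotone_iff hK0 hrow).1 hmono i)
  · simp [← Fin.top_eq_last]

lemma Kpi_sum_Iic_mul_sum_Iic_le (hπ : ∀ i ≤ n, 0 < π i) (hK0 : ∀ i j, 0 ≤ K i j)
    (hrow : ∀ i, ∑ j, K i j = 1) (hK : IsBirthDeath K)
    (hst : ∀ j : Fin (n + 1), ∑ i : Fin (n + 1), π i * K i j = π j) (hmono : IsStochMonotone K)
    (l m : Fin (n + 1)) :
    ∑ j ∈ Iic m, π j * ∑ k ∈ Iic l, Kpi n π j k ≤ ∑ j ∈ Iic m, π j * ∑ k ∈ Iic l, K j k := by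
  rcases lt_trichotomy l m with h | rfl | h
  · rw [Kpi_isBirthDeath.sum_Iic_mul_sum_Iic_of_lt (Kpi_stationary hπ) h,
      hK.sum_Iic_mul_sum_Iic_of_lt hst h]
  · rw [sum_mul_sum_self_eq _ _ (Kpi_sum_row hπ), sum_mul_sum_self_eq _ _ hrow]
    exact sub_le_sub_left (sum_Iic_mul_sum_compl_Iic_le_Kpi hπ hK0 hrow hK hst hmono l) _
  · rw [Kpi_isBirthDeath.sum_Iic_mul_sum_Iic_of_gt (Kpi_sum_row hπ) h,
      hK.sum_Iic_mul_sum_Iic_of_gt hrow h]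

lemma Kpi_sum_mul_sum_le_of_isLowerSet (hπ : ∀ i ≤ n, 0 < π i) (hK0 : ∀ i j, 0 ≤ K i j)
    (hrow : ∀ i, ∑ j, K i j = 1) (hK : IsBirthDeath K)
    (hst : ∀ j : Fin (n + 1), ∑ i : Fin (n + 1), π i * K i j = π j) (hmono : IsStochMonotone K)
    {D E : Finset (Fin (n + 1))} (hD : IsLowerSet (D : Set (Fin (n + 1))))
    (hE : IsLowerSet (E : Set (Fin (n + 1)))) :
    ∑ j ∈ E, π j * ∑ k ∈ D, Kpi n π j k ≤ ∑ j ∈ E, π j * ∑ k ∈ D, K j k := by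
  rcases D.eq_empty_or_nonempty with rfl | hD'
  · simp
  rcases E.eq_empty_or_nonempty with rfl | hE'
  · simp
  rw [eq_Iic_max'_of_isLowerSet hD hD', eq_Iic_max'_of_isLowerSet hE hE']
  exact Kpi_sum_Iic_mul_sum_Iic_le hπ hK0 hrow hK hst hmono _ _

end Comparison

theorem stmt_15_general {n : ℕ} (π : ℕ → ℝ)
    (hπpos : ∀ i, i ≤ n → 0 < π i)
    (hlc : ∀ i, 1 ≤ i → i < n → π (i - 1) * π (i + 1) ≤ π i ^ 2) :
    -- `K_π` is a Markov kernel: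
    (∀ i j, 0 ≤ Kpi n π i j) ∧ (∀ i, ∑ j, Kpi n π i j = 1) ∧
    -- it is a birth-and-death (tridiagonal) kernel:
    (∀ i j : Fin (n + 1), ((i : ℕ) + 1 < (j : ℕ) ∨ (j : ℕ) + 1 < (i : ℕ)) → Kpi n π i j = 0) ∧
    -- it is reversible with stationary distribution π:
    (∀ i j : Fin (n + 1), π i * Kpi n π i j = π j * Kpi n π j i) ∧
    -- it is stochastically monotone:
    (∀ f : Fin (n + 1) → ℝ, (∀ i, 0 ≤ f i) → Antitone f → Antitone ((Kpi n π).mulVec f)) ∧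
    -- and K_π ⪯ K for every stochastically monotone birth-and-death kernel K
    -- with stationary distribution π:
    (∀ K : Matrix (Fin (n + 1)) (Fin (n + 1)) ℝ,
      (∀ i j, 0 ≤ K i j) → (∀ i, ∑ j, K i j = 1) →
      (∀ i j : Fin (n + 1), ((i : ℕ) + 1 < (j : ℕ) ∨ (j : ℕ) + 1 < (i : ℕ)) → K i j = 0) →
      (∀ j : Fin (n + 1), ∑ i : Fin (n + 1), π (i : ℕ) * K i j = π (j : ℕ)) →
      (∀ f : Fin (n + 1) → ℝ, (∀ i, 0 ≤ f i) → Antitone f → Antitone (K.mulVec f)) →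
      ∀ D E : Finset (Fin (n + 1)), IsLowerSet (D : Set (Fin (n + 1))) →
        IsLowerSet (E : Set (Fin (n + 1))) →
        ∑ j : Fin (n + 1), π (j : ℕ) *
            (((Kpi n π).mulVec fun x => if x ∈ D then (1 : ℝ) else 0) j *
              (if j ∈ E then (1 : ℝ) else 0)) ≤
        ∑ j : Fin (n + 1), π (j : ℕ) *
            ((K.mulVec fun x => if x ∈ D then (1 : ℝ) else 0) j *
              (if j ∈ E then (1 : ℝ) else 0))) := by
  refine ⟨Kpi_nonneg (fun i hi => (hπpos i hi).le) hlc, Kpi_sum_row hπpos, Kpi_isBirthDeath,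
    Kpi_reversible, Kpi_isStochMonotone hπpos hlc, ?_⟩
  intro K hK0 hrow hK hst hmono D E hD hE
  rw [sum_mul_mulVec_indicator (fun j : Fin (n + 1) => π j),
    sum_mul_mulVec_indicator (fun j : Fin (n + 1) => π j)]
  exact Kpi_sum_mul_sum_le_of_isLowerSet hπpos hK0 hrow hK hst hmono hD hE

theorem stmt_15 {n : ℕ} (π : ℕ → ℝ)
    (hπpos : ∀ i, i ≤ n → 0 < π i)
    (hπ1 : ∑ i ∈ Finset.range (n + 1), π i = 1)
    (hlc : ∀ i, 1 ≤ i → i < n → π (i - 1) * π (i + 1) ≤ π i ^ 2) :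
    -- `K_π` is a Markov kernel:
    (∀ i j, 0 ≤ Kpi n π i j) ∧ (∀ i, ∑ j, Kpi n π i j = 1) ∧
    -- it is a birth-and-death (tridiagonal) kernel:
    (∀ i j : Fin (n + 1), ((i : ℕ) + 1 < (j : ℕ) ∨ (j : ℕ) + 1 < (i : ℕ)) → Kpi n π i j = 0) ∧
    -- it is reversible with stationary distribution π:
    (∀ i j : Fin (n + 1), π i * Kpi n π i j = π j * Kpi n π j i) ∧
    -- it is stochastically monotone:
    (∀ f : Fin (n + 1) → ℝ, (∀ i, 0 ≤ f i) → Antitone f → Antitone ((Kpi n π).mulVec f)) ∧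
    -- and K_π ⪯ K for every stochastically monotone birth-and-death kernel K
    -- with stationary distribution π:
    (∀ K : Matrix (Fin (n + 1)) (Fin (n + 1)) ℝ,
      (∀ i j, 0 ≤ K i j) → (∀ i, ∑ j, K i j = 1) →
      (∀ i j : Fin (n + 1), ((i : ℕ) + 1 < (j : ℕ) ∨ (j : ℕ) + 1 < (i : ℕ)) → K i j = 0) →
      (∀ j : Fin (n + 1), ∑ i : Fin (n + 1), π (i : ℕ) * K i j = π (j : ℕ)) →
      (∀ f : Fin (n + 1) → ℝ, (∀ i, 0 ≤ f i) → Antitone f → Antitone (K.mulVec f)) →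
      ∀ D E : Finset (Fin (n + 1)), IsLowerSet (D : Set (Fin (n + 1))) →
        IsLowerSet (E : Set (Fin (n + 1))) →
        ∑ j : Fin (n + 1), π (j : ℕ) *
            (((Kpi n π).mulVec fun x => if x ∈ D then (1 : ℝ) else 0) j *
              (if j ∈ E then (1 : ℝ) else 0)) ≤
        ∑ j : Fin (n + 1), π (j : ℕ) *
            ((K.mulVec fun x => if x ∈ D then (1 : ℝ) else 0) j *
              (if j ∈ E then (1 : ℝ) else 0))) :=
  stmt_15_general π hπpos hlc
end

section
/- For an irreducible discrete-time birth-and-death chain on {0,...,n} with stationary pmf π and birth probability p_i from state i, the expected hitting time of state n starting from state 0 equals Σ_{i=0}^{n−1} (1/(π_i p_i)) Σ_{k=0}^{i} π_k. -/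
/-
Let `S = {0, …, i}`. Summing the hitting-time equations `h k - (K h) k = 1` against `π` over
`S` and using stationarity, everything cancels except the probability flow across the cut
between `i` and `i + 1`, which for a birth-and-death chain is carried by the single edge pair
`i ↔ i + 1`:  `π_{i+1} K_{i+1,i} h_i - π_i K_{i,i+1} h_{i+1} = π(S)`.  The same computation
with `h ≡ 1` gives detailed balance `π_{i+1} K_{i+1,i} = π_i K_{i,i+1}`, so
`h_i - h_{i+1} = π(S) / (π_i K_{i,i+1})`, and the formula follows by telescoping to `h_n = 0`.
-/

open Finset

section CutFlow

variable {ι : Type*} [Fintype ι] [DecidableEq ι]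

/-- Stationarity cancels the flow between states of `S`. -/
theorem sum_mul_sub_mulVec_eq_cut_flow (K : Matrix ι ι ℝ) (π : ι → ℝ)
    (hstat : ∀ j, ∑ i, π i * K i j = π j) (h : ι → ℝ) (S : Finset ι) :
    ∑ i ∈ S, π i * (h i - ∑ j, K i j * h j) =
      ∑ i ∈ Sᶜ, ∑ j ∈ S, π i * K i j * h j - ∑ i ∈ S, ∑ j ∈ Sᶜ, π i * K i j * h j := by
  have hin : ∑ j ∈ S, π j * h j = ∑ i, ∑ j ∈ S, π i * K i j * h j := by
    rw [sum_comm]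
    refine sum_congr rfl fun j _ => ?_
    rw [← hstat j, sum_mul]
  have hout : ∑ i ∈ S, π i * ∑ j, K i j * h j = ∑ i ∈ S, ∑ j, π i * K i j * h j := by
    simp only [mul_sum, mul_assoc]
  have hsplit_i := sum_add_sum_compl S fun i => ∑ j ∈ S, π i * K i j * h j
  have hsplit_j : ∀ i, ∑ j ∈ S, π i * K i j * h j + ∑ j ∈ Sᶜ, π i * K i j * h j =
      ∑ j, π i * K i j * h j := fun i => sum_add_sum_compl S _
  simp only [mul_sub, sum_sub_distrib, hout, hin, ← hsplit_j, sum_add_distrib, ← hsplit_i]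
  ring

theorem cut_flow_balance (K : Matrix ι ι ℝ) (π : ι → ℝ) (hrow : ∀ i, ∑ j, K i j = 1)
    (hstat : ∀ j, ∑ i, π i * K i j = π j) (S : Finset ι) :
    ∑ i ∈ Sᶜ, ∑ j ∈ S, π i * K i j = ∑ i ∈ S, ∑ j ∈ Sᶜ, π i * K i j := by
  have := sum_mul_sub_mulVec_eq_cut_flow K π hstat (fun _ => 1) S
  simp only [mul_one, hrow, sub_self, mul_zero, sum_const_zero] at this
  linarith

end CutFlow

section Tridiagonal

variable {n : ℕ}

def lowerCut (i : Fin n) : Finset (Fin (n + 1)) :=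
  univ.filter fun k => (k : ℕ) ≤ (i : ℕ)

theorem sum_compl_lowerCut_sum_lowerCut {f : Fin (n + 1) → Fin (n + 1) → ℝ}
    (hf : ∀ k j : Fin (n + 1), ((k : ℕ) + 1 < (j : ℕ) ∨ (j : ℕ) + 1 < (k : ℕ)) → f k j = 0)
    (i : Fin n) :
    ∑ k ∈ (lowerCut i)ᶜ, ∑ j ∈ lowerCut i, f k j = f i.succ i.castSucc := by
  simp only [lowerCut, compl_filter, not_le]
  rw [sum_eq_single_of_mem i.succ (by simp), sum_eq_single_of_mem i.castSucc (by simp)]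
  · intro j hj hji
    simp only [mem_filter, mem_univ, true_and] at hj
    exact hf _ _ (Or.inr (by simp [Fin.ext_iff] at hji ⊢; omega))
  · intro k hk hki
    simp only [mem_filter, mem_univ, true_and] at hk
    refine sum_eq_zero fun j hj => hf _ _ (Or.inr ?_)
    simp only [mem_filter, mem_univ, true_and] at hj
    rw [ne_eq, Fin.ext_iff, Fin.val_succ] at hki
    omega

theorem sum_lowerCut_sum_compl_lowerCut {f : Fin (n + 1) → Fin (n + 1) → ℝ}
    (hf : ∀ k j : Fin (n + 1), ((k : ℕ) + 1 < (j : ℕ) ∨ (j : ℕ) + 1 < (k : ℕ)) → f k j = 0)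
    (i : Fin n) :
    ∑ k ∈ lowerCut i, ∑ j ∈ (lowerCut i)ᶜ, f k j = f i.castSucc i.succ := by
  rw [sum_comm]
  exact sum_compl_lowerCut_sum_lowerCut (f := fun j k => f k j)
    (fun k j hkj => hf j k hkj.symm) i

end Tridiagonal

theorem Fin.sum_univ_castSucc_sub_succ {M : Type*} [AddCommGroup M] {n : ℕ}
    (h : Fin (n + 1) → M) :
    ∑ i : Fin n, (h i.castSucc - h i.succ) = h 0 - h (Fin.last n) := by
  rw [sum_sub_distrib, eq_sub_of_add_eq (Fin.sum_univ_castSucc h).symm,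
    eq_sub_of_add_eq' (Fin.sum_univ_succ h).symm]
  abel

theorem hittingTime_castSucc_sub_succ {n : ℕ} (K : Matrix (Fin (n + 1)) (Fin (n + 1)) ℝ)
    (π : Fin (n + 1) → ℝ) (hrow : ∀ i, ∑ j, K i j = 1)
    (htri : ∀ i j : Fin (n + 1), ((i : ℕ) + 1 < (j : ℕ) ∨ (j : ℕ) + 1 < (i : ℕ)) → K i j = 0)
    (hbirth : ∀ i : Fin n, 0 < K i.castSucc i.succ) (hπpos : ∀ i, 0 < π i)
    (hstat : ∀ j, ∑ i, π i * K i j = π j) (h : Fin (n + 1) → ℝ)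
    (hsys : ∀ i : Fin (n + 1), i ≠ Fin.last n → h i = 1 + ∑ j, K i j * h j) (i : Fin n) :
    h i.castSucc - h i.succ =
      1 / (π i.castSucc * K i.castSucc i.succ) * ∑ k ∈ lowerCut i, π k := by
  have hflux_vanish : ∀ k j : Fin (n + 1),
      ((k : ℕ) + 1 < (j : ℕ) ∨ (j : ℕ) + 1 < (k : ℕ)) → π k * K k j = 0 := by
    intro k j hkj
    rw [htri k j hkj, mul_zero]
  have hvanish : ∀ k j : Fin (n + 1),
      ((k : ℕ) + 1 < (j : ℕ) ∨ (j : ℕ) + 1 < (k : ℕ)) → π k * K k j * h j = 0 := by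
    intro k j hkj
    rw [hflux_vanish k j hkj, zero_mul]
  have hflow := sum_mul_sub_mulVec_eq_cut_flow K π hstat h (lowerCut i)
  have hbalance := cut_flow_balance K π hrow hstat (lowerCut i)
  rw [sum_compl_lowerCut_sum_lowerCut hvanish, sum_lowerCut_sum_compl_lowerCut hvanish] at hflow
  rw [sum_compl_lowerCut_sum_lowerCut hflux_vanish,
    sum_lowerCut_sum_compl_lowerCut hflux_vanish] at hbalance
  have hone : ∀ k ∈ lowerCut i, π k * (h k - ∑ j, K k j * h j) = π k := by
    intro k hk
    have hk_ne : k ≠ Fin.last n := by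
      simp only [lowerCut, mem_filter, mem_univ, true_and] at hk
      rw [ne_eq, Fin.ext_iff, Fin.val_last]
      omega
    rw [hsys k hk_ne]
    ring
  rw [sum_congr rfl hone] at hflow
  have hpos := mul_pos (hπpos i.castSucc) (hbirth i)
  rw [one_div_mul_eq_div, eq_div_iff hpos.ne']
  linear_combination -hflow - h i.castSucc * hbalance

theorem stmt_16_general {n : ℕ} (K : Matrix (Fin (n + 1)) (Fin (n + 1)) ℝ)
    (π : Fin (n + 1) → ℝ)
    (hrow : ∀ i, ∑ j, K i j = 1)
    -- birth-and-death (tridiagonal) kernel: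
    (htri : ∀ i j : Fin (n + 1), ((i : ℕ) + 1 < (j : ℕ) ∨ (j : ℕ) + 1 < (i : ℕ)) → K i j = 0)
    -- irreducibility: positive birth and death probabilities:
    (hbirth : ∀ i : Fin n, 0 < K i.castSucc i.succ)
    -- π is the stationary pmf:
    (hπpos : ∀ i, 0 < π i)
    (hstat : ∀ j, ∑ i, π i * K i j = π j)
    -- h is the vector of expected hitting times of state n:
    (h : Fin (n + 1) → ℝ)
    (hlast : h (Fin.last n) = 0)
    (hsys : ∀ i : Fin (n + 1), i ≠ Fin.last n → h i = 1 + ∑ j, K i j * h j) :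
    h 0 = ∑ i : Fin n,
      (1 / (π i.castSucc * K i.castSucc i.succ)) *
        ∑ k ∈ Finset.univ.filter (fun k : Fin (n + 1) => (k : ℕ) ≤ (i : ℕ)), π k := by
  rw [← sub_zero (h 0), ← hlast, ← Fin.sum_univ_castSucc_sub_succ]
  exact sum_congr rfl fun i _ =>
    hittingTime_castSucc_sub_succ K π hrow htri hbirth hπpos hstat h hsys i

theorem stmt_16 {n : ℕ} (K : Matrix (Fin (n + 1)) (Fin (n + 1)) ℝ)
    (π : Fin (n + 1) → ℝ)
    (hnn : ∀ i j, 0 ≤ K i j) (hrow : ∀ i, ∑ j, K i j = 1)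
    -- birth-and-death (tridiagonal) kernel:
    (htri : ∀ i j : Fin (n + 1), ((i : ℕ) + 1 < (j : ℕ) ∨ (j : ℕ) + 1 < (i : ℕ)) → K i j = 0)
    -- irreducibility: positive birth and death probabilities:
    (hbirth : ∀ i : Fin n, 0 < K i.castSucc i.succ)
    (hdeath : ∀ i : Fin n, 0 < K i.succ i.castSucc)
    -- π is the stationary pmf:
    (hπpos : ∀ i, 0 < π i) (hπ1 : ∑ i, π i = 1)
    (hstat : ∀ j, ∑ i, π i * K i j = π j)
    -- h is the vector of expected hitting times of state n:
    (h : Fin (n + 1) → ℝ)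
    (hlast : h (Fin.last n) = 0)
    (hsys : ∀ i : Fin (n + 1), i ≠ Fin.last n → h i = 1 + ∑ j, K i j * h j) :
    h 0 = ∑ i : Fin n,
      (1 / (π i.castSucc * K i.castSucc i.succ)) *
        ∑ k ∈ Finset.univ.filter (fun k : Fin (n + 1) => (k : ℕ) ≤ (i : ℕ)), π k :=
  stmt_16_general K π hrow htri hbirth hπpos hstat h hlast hsys
end

section
/- For even n ≥ 2, the unique minimizer of f(p) := Σ_{k=0}^{n−1} (k+1)(n−k)/p_k over nonnegative vectors p = (p₀,...,p_{n−1}) satisfying p_{k−1} + p_k ≤ 1 for k = 0,...,n (with p_{−1} = p_n = 0) is p_k ≡ 1/2. -/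
open Finset

noncomputable def Lam18 (n : ℕ) : ℕ → ℝ := fun k =>
  if Even k then 2 * (k : ℝ) * ((n : ℝ) - (k : ℝ))
  else 2 * ((k : ℝ) + 1) * ((n : ℝ) - (k : ℝ) + 1)

lemma Lam18_add (n k : ℕ) :
    Lam18 n k + Lam18 n (k + 1) = 4 * (((k : ℝ) + 1) * ((n : ℝ) - (k : ℝ))) := by
  rcases Nat.even_or_odd k with h | h
  · have h1 : ¬ Even (k + 1) := by simp [Nat.even_add_one, h]
    simp only [Lam18, if_pos h, if_neg h1]
    push_cast; ring
  · have h0 : ¬ Even k := Nat.not_even_iff_odd.mpr h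
    have h1 : Even (k + 1) := Nat.even_add_one.mpr h0
    simp only [Lam18, if_neg h0, if_pos h1]
    push_cast; ring

lemma Lam18_nonneg (n k : ℕ) (h : k ≤ n) : 0 ≤ Lam18 n k := by
  have hk : (k : ℝ) ≤ (n : ℝ) := Nat.cast_le.mpr h
  have hk0 : (0 : ℝ) ≤ (k : ℝ) := Nat.cast_nonneg k
  unfold Lam18
  split_ifs <;> nlinarith

lemma Lam18_zero (n : ℕ) : Lam18 n 0 = 0 := by simp [Lam18]

lemma Lam18_top (n : ℕ) (heven : Even n) : Lam18 n n = 0 := by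
  simp [Lam18, heven]

lemma key18 (n : ℕ) (hn : 1 ≤ n) (heven : Even n) (q : ℕ → ℝ) :
    ∑ k ∈ Finset.range n, (Lam18 n k + Lam18 n (k + 1)) * q k
      = ∑ k ∈ Finset.Ico 1 n, Lam18 n k * (q (k - 1) + q k) := by
  have h1 : ∑ k ∈ Finset.range n, Lam18 n k * q k
      = ∑ k ∈ Finset.Ico 1 n, Lam18 n k * q k := by
    refine (Finset.sum_subset ?_ ?_).symm
    · intro x hx
      simp only [Finset.mem_Ico] at hx
      simp [Finset.mem_range]; omega
    · intro x hx hx'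
      simp only [Finset.mem_range] at hx
      simp only [Finset.mem_Ico] at hx'
      have : x = 0 := by omega
      subst this
      simp [Lam18_zero]
  have h2 : ∑ k ∈ Finset.range n, Lam18 n (k + 1) * q k
      = ∑ k ∈ Finset.Ico 1 n, Lam18 n k * q (k - 1) := by
    have e1 : ∑ k ∈ Finset.Ico 1 (n + 1), Lam18 n k * q (k - 1)
        = ∑ k ∈ Finset.range n, Lam18 n (k + 1) * q k := by
      rw [Finset.sum_Ico_eq_sum_range]
      simp only [Nat.add_sub_cancel]
      apply Finset.sum_congr rfl
      intro i _
      rw [Nat.add_comm 1 i]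
      simp
    have e2 : ∑ k ∈ Finset.Ico 1 (n + 1), Lam18 n k * q (k - 1)
        = ∑ k ∈ Finset.Ico 1 n, Lam18 n k * q (k - 1) + Lam18 n n * q (n - 1) := by
      exact Finset.sum_Ico_succ_top hn _
    rw [← e1, e2, Lam18_top n heven]
    ring
  calc ∑ k ∈ Finset.range n, (Lam18 n k + Lam18 n (k + 1)) * q k
      = ∑ k ∈ Finset.range n, Lam18 n k * q k
        + ∑ k ∈ Finset.range n, Lam18 n (k + 1) * q k := by
        rw [← Finset.sum_add_distrib]; apply Finset.sum_congr rfl; intros; ring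
    _ = ∑ k ∈ Finset.Ico 1 n, Lam18 n k * q k
        + ∑ k ∈ Finset.Ico 1 n, Lam18 n k * q (k - 1) := by rw [h1, h2]
    _ = ∑ k ∈ Finset.Ico 1 n, Lam18 n k * (q (k - 1) + q k) := by
        rw [← Finset.sum_add_distrib]; apply Finset.sum_congr rfl; intros; ring

theorem stmt_18 {n : ℕ} (hn : 2 ≤ n) (heven : Even n) (p : ℕ → ℝ)
    (hpos : ∀ k, k < n → 0 < p k)
    (hp0 : p 0 ≤ 1) (hplast : p (n - 1) ≤ 1)
    (hsum : ∀ k, k + 1 < n → p k + p (k + 1) ≤ 1) :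
    (∑ k ∈ Finset.range n, ((k : ℝ) + 1) * ((n : ℝ) - (k : ℝ)) / (1 / 2 : ℝ)) ≤
      (∑ k ∈ Finset.range n, ((k : ℝ) + 1) * ((n : ℝ) - (k : ℝ)) / p k) ∧
    ((∑ k ∈ Finset.range n, ((k : ℝ) + 1) * ((n : ℝ) - (k : ℝ)) / p k) =
        (∑ k ∈ Finset.range n, ((k : ℝ) + 1) * ((n : ℝ) - (k : ℝ)) / (1 / 2 : ℝ)) →
      ∀ k, k < n → p k = 1 / 2) := by
  have hn1 : 1 ≤ n := by omega
  set c : ℕ → ℝ := fun k => ((k : ℝ) + 1) * ((n : ℝ) - (k : ℝ)) with hc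
  have hcpos : ∀ k, k < n → 0 < c k := by
    intro k hk
    have : (k : ℝ) < (n : ℝ) := Nat.cast_lt.mpr hk
    have : (0:ℝ) ≤ (k:ℝ) := Nat.cast_nonneg k
    simp only [hc]
    nlinarith
  -- the target value
  have hhalf : (∑ k ∈ Finset.range n, c k / (1 / 2 : ℝ))
      = 2 * ∑ k ∈ Finset.range n, c k := by
    rw [Finset.mul_sum]
    apply Finset.sum_congr rfl
    intros; ring
  -- sum of multipliers
  have hS : ∑ k ∈ Finset.Ico 1 n, Lam18 n k = 2 * ∑ k ∈ Finset.range n, c k := by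
    have := key18 n hn1 heven (fun _ => (1/2 : ℝ))
    have l : ∑ k ∈ Finset.range n, (Lam18 n k + Lam18 n (k + 1)) * (1/2 : ℝ)
        = 2 * ∑ k ∈ Finset.range n, c k := by
      rw [Finset.mul_sum]
      apply Finset.sum_congr rfl
      intro k _
      rw [Lam18_add]
      ring
    have r : ∑ k ∈ Finset.Ico 1 n, Lam18 n k * ((1/2 : ℝ) + (1/2 : ℝ))
        = ∑ k ∈ Finset.Ico 1 n, Lam18 n k := by
      apply Finset.sum_congr rfl; intros; ring
    rw [l, r] at this
    exact this.symm
  -- bound on ∑ 4 c p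
  have hB : ∑ k ∈ Finset.range n, 4 * c k * p k ≤ 2 * ∑ k ∈ Finset.range n, c k := by
    have e : ∑ k ∈ Finset.range n, 4 * c k * p k
        = ∑ k ∈ Finset.range n, (Lam18 n k + Lam18 n (k + 1)) * p k := by
      apply Finset.sum_congr rfl
      intro k _
      rw [Lam18_add]
    rw [e, key18 n hn1 heven p, ← hS]
    apply Finset.sum_le_sum
    intro k hk
    simp only [Finset.mem_Ico] at hk
    have hL : 0 ≤ Lam18 n k := Lam18_nonneg n k (by omega)
    have hpk : p (k - 1) + p k ≤ 1 := by
      have h := hsum (k - 1) (by omega)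
      have : k - 1 + 1 = k := by omega
      rwa [this] at h
    nlinarith
  -- termwise tangent line inequality
  have hterm : ∀ k ∈ Finset.range n,
      4 * c k - 4 * c k * p k ≤ c k / p k := by
    intro k hk
    simp only [Finset.mem_range] at hk
    have hp := hpos k hk
    have hck := hcpos k hk
    have hid : c k / p k - (4 * c k - 4 * c k * p k)
        = c k * (2 * p k - 1) ^ 2 / p k := by
      field_simp
      ring
    have : 0 ≤ c k * (2 * p k - 1) ^ 2 / p k := by positivity
    linarith [hid ▸ this]
  have hlow : 2 * ∑ k ∈ Finset.range n, c k ≤ ∑ k ∈ Finset.range n, c k / p k := by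
    have h1 : ∑ k ∈ Finset.range n, (4 * c k - 4 * c k * p k)
        ≤ ∑ k ∈ Finset.range n, c k / p k := Finset.sum_le_sum hterm
    have h2 : ∑ k ∈ Finset.range n, (4 * c k - 4 * c k * p k)
        = 4 * (∑ k ∈ Finset.range n, c k) - ∑ k ∈ Finset.range n, 4 * c k * p k := by
      rw [Finset.sum_sub_distrib, Finset.mul_sum]
    linarith
  constructor
  · rw [hhalf]; exact hlow
  · intro heq k hk
    rw [hhalf] at heq
    -- the slack terms
    have hslack : ∑ k ∈ Finset.range n, (c k / p k - (4 * c k - 4 * c k * p k)) = 0 := by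
      have hnn : ∀ j ∈ Finset.range n,
          0 ≤ c j / p j - (4 * c j - 4 * c j * p j) := by
        intro j hj
        have := hterm j hj
        linarith
      have hle : ∑ k ∈ Finset.range n, (c k / p k - (4 * c k - 4 * c k * p k)) ≤ 0 := by
        have h2 : ∑ k ∈ Finset.range n, (c k / p k - (4 * c k - 4 * c k * p k))
            = ∑ k ∈ Finset.range n, c k / p k
              - (4 * (∑ k ∈ Finset.range n, c k) - ∑ k ∈ Finset.range n, 4 * c k * p k) := by
          rw [Finset.sum_sub_distrib, Finset.sum_sub_distrib, Finset.mul_sum]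
        rw [h2, heq]
        linarith
      exact le_antisymm hle (Finset.sum_nonneg hnn)
    have hzero := (Finset.sum_eq_zero_iff_of_nonneg (by
      intro j hj
      have := hterm j hj
      linarith)).mp hslack k (Finset.mem_range.mpr hk)
    have hp := hpos k hk
    have hck := hcpos k hk
    have hid : c k / p k - (4 * c k - 4 * c k * p k)
        = c k * (2 * p k - 1) ^ 2 / p k := by
      field_simp; ring
    rw [hid] at hzero
    have h1 : c k * (2 * p k - 1) ^ 2 = 0 := by
      field_simp at hzero
      linarith
    have : (2 * p k - 1) ^ 2 = 0 := by
      rcases mul_eq_zero.mp h1 with h | h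
      · exact absurd h (ne_of_gt hck)
      · exact h
    nlinarith [sq_nonneg (2 * p k - 1), pow_eq_zero_iff (n := 2) (by norm_num) |>.mp this]
end
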